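/- arXiv:2106.09984 — 11 statements merged into one kernel-verified Lean document; each statement's English description precedes it below -/
import Mathlib

section
/- Let R be a commutative ring, M an R-module satisfying ACC on cyclic submodules, and N an R-submodule of M. Suppose (x_n) is a sequence in M and (r_n) a sequence in R such that for every n, x_n - r_n·x_{n+1} ∈ N (i.e., the image of x_n in M/N equals r_n times the image of x_{n+1}) and r_n·N = N. Then the ascending chain of cyclic submodules R·x̄_1 ⊆ R·x̄_2 ⊆ ⋯ of M/N stabilizes; equivalently, there exists k such that N + R·x_n = N + R·x_k for all n ≥ k. -/
open Pointwise

/-- An `R`-module `M` satisfies ACC on cyclic submodules (is ACCC) if every ascending chain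
of cyclic submodules of `M` stabilizes. -/
def ModuleACCC (R M : Type*) [CommRing R] [AddCommGroup M] [Module R M] : Prop :=
  ∀ f : ℕ → M, (∀ n, Submodule.span R {f n} ≤ Submodule.span R {f (n + 1)}) →
    ∃ k, ∀ n, k ≤ n → Submodule.span R {f n} = Submodule.span R {f k}

/-- If `a - b ∈ N` then `N ⊔ span {a} = N ⊔ span {b}`. -/
lemma sup_span_eq_of_sub_mem {R M : Type*} [CommRing R] [AddCommGroup M] [Module R M]
    (N : Submodule R M) {a b : M} (h : a - b ∈ N) :
    N ⊔ Submodule.span R {a} = N ⊔ Submodule.span R {b} := by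
  have key : ∀ u v : M, u - v ∈ N → Submodule.span R {u} ≤ N ⊔ Submodule.span R {v} := by
    intro u v huv
    rw [Submodule.span_singleton_le_iff_mem]
    have : u = (u - v) + v := by abel
    rw [this]
    exact Submodule.add_mem _ (Submodule.mem_sup_left huv)
      (Submodule.mem_sup_right (Submodule.mem_span_singleton_self v))
  apply le_antisymm
  · exact sup_le le_sup_left (key a b h)
  · refine sup_le le_sup_left (key b a ?_)
    simpa using N.neg_mem h

/-- Let `R` be a commutative ring, `M` an `R`-module satisfying ACC on cyclic submodules and
`N` a submodule of `M`.  If `(xₙ)` is a sequence in `M` and `(rₙ)` a sequence in `R` such that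
the image of `xₙ` in `M/N` is `rₙ` times the image of `x_{n+1}` and `rₙ • N = N` for every `n`,
then the ascending chain of cyclic submodules `R·x̄₁ ⊆ R·x̄₂ ⊆ ⋯` of `M/N` stabilizes, i.e.
there is `k` with `N + R·xₙ = N + R·x_k` for all `n ≥ k`. -/
theorem accc_quotient_chain_stabilizes {R M : Type*} [CommRing R] [AddCommGroup M] [Module R M]
    (hM : ModuleACCC R M) (N : Submodule R M) (x : ℕ → M) (r : ℕ → R)
    (hx : ∀ n, x n - r n • x (n + 1) ∈ N)
    (hN : ∀ n, r n • N = N) :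
    ∃ k, ∀ n, k ≤ n →
      N ⊔ Submodule.span R {x n} = N ⊔ Submodule.span R {x k} := by
  classical
  -- Key: adjust the representative to get an exact relation in `M`.
  have key : ∀ n (u : M), u - x n ∈ N →
      ∃ w, w ∈ N ∧ u - r n • x (n + 1) = r n • w := by
    intro n u hu
    have h1 : u - r n • x (n + 1) ∈ N := by
      have := N.add_mem hu (hx n)
      have e : (u - x n) + (x n - r n • x (n + 1)) = u - r n • x (n + 1) := by abel
      rwa [e] at this
    rw [← hN n] at h1
    have h2 : u - r n • x (n + 1) ∈ r n • (N : Set M) := by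
      rwa [← Submodule.coe_pointwise_smul]
    rcases h2 with ⟨w, hw, hww⟩
    exact ⟨w, hw, hww.symm⟩
  -- define the adjusted sequence
  let f : ℕ → M → M := fun n u =>
    if h : u - x n ∈ N then x (n + 1) + (key n u h).choose else x (n + 1)
  let z : ℕ → M := fun n => Nat.rec (x 0) f n
  have hz0 : z 0 = x 0 := rfl
  have hzstep : ∀ n, z (n + 1) = f n (z n) := fun n => rfl
  have hinv : ∀ n, z n - x n ∈ N := by
    intro n
    induction n with
    | zero => simp [hz0]
    | succ n ih =>
      rw [hzstep n]
      simp only [f, dif_pos ih]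
      simpa using (key n (z n) ih).choose_spec.1
  have hrel : ∀ n, z n = r n • z (n + 1) := by
    intro n
    rw [hzstep n]
    simp only [f, dif_pos (hinv n)]
    have hspec := (key n (z n) (hinv n)).choose_spec.2
    rw [smul_add, ← hspec]
    abel
  have hchain : ∀ n, Submodule.span R {z n} ≤ Submodule.span R {z (n + 1)} := by
    intro n
    rw [Submodule.span_singleton_le_iff_mem, hrel n]
    exact Submodule.smul_mem _ _ (Submodule.mem_span_singleton_self _)
  obtain ⟨k, hk⟩ := hM z hchain
  refine ⟨k, fun n hn => ?_⟩
  calc N ⊔ Submodule.span R {x n} = N ⊔ Submodule.span R {z n} :=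
        (sup_span_eq_of_sub_mem N (hinv n)).symm
    _ = N ⊔ Submodule.span R {z k} := by rw [hk n hn]
    _ = N ⊔ Submodule.span R {x k} := sup_span_eq_of_sub_mem N (hinv k)
end

section
/- Let R be a commutative ring and M a finitely generated R-module. Then the idealization R⋉M satisfies ACCP if and only if R satisfies ACCP and M satisfies ACC on cyclic submodules. -/
/-- A commutative ring satisfies ACCP if every ascending chain of principal ideals stabilizes. -/
def RingACCP (R : Type*) [CommRing R] : Prop :=
  ∀ f : ℕ → R, (∀ n, Ideal.span {f n} ≤ Ideal.span {f (n + 1)}) →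
    ∃ k, ∀ n, k ≤ n → Ideal.span {f n} = Ideal.span {f k}

/-- Let `R` be a commutative ring and `M` a finitely generated `R`-module.  Then the
idealization `R ⋉ M` satisfies ACCP if and only if `R` satisfies ACCP and `M` satisfies
ACC on cyclic submodules. -/
theorem idealization_accp_iff {R M : Type*} [CommRing R] [AddCommGroup M] [Module R M]
    [Module Rᵐᵒᵖ M] [IsCentralScalar R M] [Module.Finite R M] :
    RingACCP (TrivSqZeroExt R M) ↔ RingACCP R ∧ ModuleACCC R M := by
  constructor
  · intro hS
    constructor
    · -- RingACCP R
      intro f hf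
      have hchain : ∀ n, Ideal.span {(TrivSqZeroExt.inl (f n) : TrivSqZeroExt R M)} ≤
          Ideal.span {(TrivSqZeroExt.inl (f (n+1)) : TrivSqZeroExt R M)} := by
        intro n
        obtain ⟨t, ht⟩ := Ideal.mem_span_singleton'.mp (hf n (Ideal.subset_span rfl))
        rw [Ideal.span_le, Set.singleton_subset_iff]
        exact Ideal.mem_span_singleton'.mpr ⟨TrivSqZeroExt.inl t, by
          rw [TrivSqZeroExt.inl_mul_inl, ht]⟩
      obtain ⟨k, hk⟩ := hS (fun n => TrivSqZeroExt.inl (f n)) hchain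
      replace hk : ∀ n, k ≤ n → Ideal.span {(TrivSqZeroExt.inl (f n) : TrivSqZeroExt R M)} =
          Ideal.span {(TrivSqZeroExt.inl (f k) : TrivSqZeroExt R M)} := hk
      refine ⟨k, fun n hn => le_antisymm ?_ ?_⟩
      · rw [Ideal.span_le, Set.singleton_subset_iff]
        have h1 : (TrivSqZeroExt.inl (f n) : TrivSqZeroExt R M) ∈
            Ideal.span {(TrivSqZeroExt.inl (f k) : TrivSqZeroExt R M)} := by
          rw [← hk n hn]; exact Ideal.subset_span rfl
        obtain ⟨t, ht⟩ := Ideal.mem_span_singleton'.mp h1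
        refine Ideal.mem_span_singleton'.mpr ⟨t.fst, ?_⟩
        have h2 := congrArg TrivSqZeroExt.fst ht
        rwa [TrivSqZeroExt.fst_mul, TrivSqZeroExt.fst_inl, TrivSqZeroExt.fst_inl] at h2
      · rw [Ideal.span_le, Set.singleton_subset_iff]
        have h1 : (TrivSqZeroExt.inl (f k) : TrivSqZeroExt R M) ∈
            Ideal.span {(TrivSqZeroExt.inl (f n) : TrivSqZeroExt R M)} := by
          rw [hk n hn]; exact Ideal.subset_span rfl
        obtain ⟨t, ht⟩ := Ideal.mem_span_singleton'.mp h1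
        refine Ideal.mem_span_singleton'.mpr ⟨t.fst, ?_⟩
        have h2 := congrArg TrivSqZeroExt.fst ht
        rwa [TrivSqZeroExt.fst_mul, TrivSqZeroExt.fst_inl, TrivSqZeroExt.fst_inl] at h2
    · -- ModuleACCC R M
      intro f hf
      have hchain : ∀ n, Ideal.span {(TrivSqZeroExt.inr (f n) : TrivSqZeroExt R M)} ≤
          Ideal.span {(TrivSqZeroExt.inr (f (n+1)) : TrivSqZeroExt R M)} := by
        intro n
        obtain ⟨t, ht⟩ := Submodule.mem_span_singleton.mp (hf n (Submodule.subset_span rfl))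
        rw [Ideal.span_le, Set.singleton_subset_iff]
        exact Ideal.mem_span_singleton'.mpr ⟨TrivSqZeroExt.inl t, by
          rw [TrivSqZeroExt.inl_mul_inr, ht]⟩
      obtain ⟨k, hk⟩ := hS (fun n => TrivSqZeroExt.inr (f n)) hchain
      replace hk : ∀ n, k ≤ n → Ideal.span {(TrivSqZeroExt.inr (f n) : TrivSqZeroExt R M)} =
          Ideal.span {(TrivSqZeroExt.inr (f k) : TrivSqZeroExt R M)} := hk
      refine ⟨k, fun n hn => le_antisymm ?_ ?_⟩
      · rw [Submodule.span_le, Set.singleton_subset_iff]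
        have h1 : (TrivSqZeroExt.inr (f n) : TrivSqZeroExt R M) ∈
            Ideal.span {(TrivSqZeroExt.inr (f k) : TrivSqZeroExt R M)} := by
          rw [← hk n hn]; exact Ideal.subset_span rfl
        obtain ⟨t, ht⟩ := Ideal.mem_span_singleton'.mp h1
        refine Submodule.mem_span_singleton.mpr ⟨t.fst, ?_⟩
        have h2 := congrArg TrivSqZeroExt.snd ht
        simp only [TrivSqZeroExt.snd_mul, TrivSqZeroExt.snd_inr, TrivSqZeroExt.fst_inr,
          MulOpposite.op_zero, zero_smul, add_zero] at h2
        exact h2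
      · rw [Submodule.span_le, Set.singleton_subset_iff]
        have h1 : (TrivSqZeroExt.inr (f k) : TrivSqZeroExt R M) ∈
            Ideal.span {(TrivSqZeroExt.inr (f n) : TrivSqZeroExt R M)} := by
          rw [hk n hn]; exact Ideal.subset_span rfl
        obtain ⟨t, ht⟩ := Ideal.mem_span_singleton'.mp h1
        refine Submodule.mem_span_singleton.mpr ⟨t.fst, ?_⟩
        have h2 := congrArg TrivSqZeroExt.snd ht
        simp only [TrivSqZeroExt.snd_mul, TrivSqZeroExt.snd_inr, TrivSqZeroExt.fst_inr,
          MulOpposite.op_zero, zero_smul, add_zero] at h2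
        exact h2
  · rintro ⟨hR, hM⟩
    intro F hF
    -- extract multipliers for the chain
    have hmem : ∀ n, ∃ t : TrivSqZeroExt R M, t * F (n+1) = F n :=
      fun n => Ideal.mem_span_singleton'.mp (hF n (Ideal.subset_span rfl))
    choose s hs using hmem
    have ha1 : ∀ n, (s n).fst * (F (n+1)).fst = (F n).fst := by
      intro n
      have h := congrArg TrivSqZeroExt.fst (hs n)
      rwa [TrivSqZeroExt.fst_mul] at h
    have ha2 : ∀ n, (s n).fst • (F (n+1)).snd
        + MulOpposite.op (F (n+1)).fst • (s n).snd = (F n).snd := by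
      intro n
      have h := congrArg TrivSqZeroExt.snd (hs n)
      rwa [TrivSqZeroExt.snd_mul] at h
    have ha2' : ∀ n, (s n).fst • (F (n+1)).snd + (F (n+1)).fst • (s n).snd = (F n).snd := by
      intro n
      have h := ha2 n
      rwa [op_smul_eq_smul] at h
    -- the fst chain stabilizes
    have hRchain : ∀ n, Ideal.span {(F n).fst} ≤ Ideal.span {(F (n+1)).fst} := by
      intro n
      rw [Ideal.span_le, Set.singleton_subset_iff]
      exact Ideal.mem_span_singleton'.mpr ⟨(s n).fst, ha1 n⟩
    obtain ⟨k, hk⟩ := hR (fun n => (F n).fst) hRchain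
    replace hk : ∀ n, k ≤ n → Ideal.span {(F n).fst} = Ideal.span {(F k).fst} := hk
    -- choose division witnesses
    have hc' : ∀ j : ℕ, (F (k+j+1)).fst ∈ Ideal.span {(F (k+j)).fst} := by
      intro j
      rw [hk (k+j) (Nat.le_add_right k j), ← hk (k+j+1) (by omega)]
      exact Ideal.subset_span rfl
    choose c hcs using fun j => Ideal.mem_span_singleton'.mp (hc' j)
    have he' : ∀ j : ℕ, (F k).fst ∈ Ideal.span {(F (k+j)).fst} := by
      intro j
      rw [hk (k+j) (Nat.le_add_right k j)]
      exact Ideal.subset_span rfl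
    choose e hes using fun j => Ideal.mem_span_singleton'.mp (he' j)
    have hg' : ∀ j : ℕ, (F (k+j+1)).fst ∈ Ideal.span {(F k).fst} := by
      intro j
      rw [← hk (k+j+1) (by omega)]
      exact Ideal.subset_span rfl
    choose g hgs using fun j => Ideal.mem_span_singleton'.mp (hg' j)
    -- the correction sequence
    let w : ℕ → M := fun j => j.rec (0 : M) (fun j wj => c j • (g j • (s (k+j)).snd + wj))
    have hwS : ∀ j, w (j+1) = c j • (g j • (s (k+j)).snd + w j) := fun _ => rfl
    -- key scalar identity
    have key0 : ∀ j, ((s (k+j)).fst * c j) * (F k).fst = (F k).fst := by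
      intro j
      linear_combination (1 - (s (k+j)).fst * c j) * hes j
        + e j * (s (k+j)).fst * hcs j + e j * ha1 (k+j)
    -- the corrected sequence is a genuine cyclic chain
    let m' : ℕ → M := fun j => (F (k+j)).snd + (F k).fst • w j
    have hm' : ∀ j, m' j = (s (k+j)).fst • m' (j+1) := by
      intro j
      show (F (k+j)).snd + (F k).fst • w j
          = (s (k+j)).fst • ((F (k+j+1)).snd + (F k).fst • w (j+1))
      rw [hwS j, ← ha2' (k+j)]
      linear_combination (norm := module)
        (-(g j)) • (key0 j • (s (k+j)).snd) - hgs j • (s (k+j)).snd - key0 j • w j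
    have hMchain : ∀ j, Submodule.span R {m' j} ≤ Submodule.span R {m' (j+1)} := by
      intro j
      rw [Submodule.span_le, Set.singleton_subset_iff]
      exact Submodule.mem_span_singleton.mpr ⟨(s (k+j)).fst, (hm' j).symm⟩
    obtain ⟨l, hl⟩ := hM m' hMchain
    -- downward inclusions beyond k + l
    have down : ∀ j, l ≤ j → Ideal.span {F (k+j+1)} ≤ Ideal.span {F (k+j)} := by
      intro j hj
      rw [Ideal.span_le, Set.singleton_subset_iff]
      have hbmem : m' (j+1) ∈ Submodule.span R {m' j} := by
        rw [hl j hj, ← hl (j+1) (by omega)]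
        exact Submodule.subset_span rfl
      obtain ⟨b, hb⟩ := Submodule.mem_span_singleton.mp hbmem
      have hb' : b • ((F (k+j)).snd + (F k).fst • w j)
          = (F (k+j+1)).snd + (F k).fst • w (j+1) := hb
      have hm2 : (F (k+j+1)).snd
          = b • ((F (k+j)).snd + (F k).fst • w j) - (F k).fst • w (j+1) :=
        eq_sub_of_add_eq hb'.symm
      have hA2 : (s (k+j)).fst • (b • ((F (k+j)).snd + (F k).fst • w j)
            - (F k).fst • w (j+1)) + (F (k+j+1)).fst • (s (k+j)).snd = (F (k+j)).snd := by
        rw [← hm2]; exact ha2' (k+j)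
      refine Ideal.mem_span_singleton'.mpr
        ⟨⟨c j + (1 - (s (k+j)).fst * c j) * b,
          e j • (c j • ((s (k+j)).fst • w (j+1)) - (c j * g j) • (s (k+j)).snd
            - (c j * (s (k+j)).fst * b) • w j + b • w j - w (j+1))⟩, ?_⟩
      apply TrivSqZeroExt.ext
      · show (c j + (1 - (s (k+j)).fst * c j) * b) * (F (k+j)).fst = (F (k+j+1)).fst
        linear_combination (1 - (s (k+j)).fst * b) * hcs j - b * ha1 (k+j)
      · show (c j + (1 - (s (k+j)).fst * c j) * b) • (F (k+j)).snd
            + MulOpposite.op (F (k+j)).fst •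
              (e j • (c j • ((s (k+j)).fst • w (j+1)) - (c j * g j) • (s (k+j)).snd
                - (c j * (s (k+j)).fst * b) • w j + b • w j - w (j+1)))
            = (F (k+j+1)).snd
        rw [op_smul_eq_smul, hm2]
        linear_combination (norm := module) (-(c j)) • hA2
          + hes j • (c j • ((s (k+j)).fst • w (j+1)) - (c j * g j) • (s (k+j)).snd
            - (c j * (s (k+j)).fst * b) • w j + b • w j - w (j+1))
          + (-(c j)) • (hgs j • (s (k+j)).snd)
    -- conclude
    refine ⟨k + l, fun n hn => le_antisymm ?_ ?_⟩
    · induction n, hn using Nat.le_induction with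
      | base => exact le_rfl
      | succ n hn ih =>
        have h1 := down (n - k) (by omega)
        rw [show k + (n - k) = n from by omega] at h1
        exact h1.trans ih
    · exact (monotone_nat_of_le_succ (f := fun n => Ideal.span {F n}) hF) hn
end

section
/- Let R be a commutative ring. Then R satisfies ACCP if and only if the self-idealization R⋉R satisfies ACCP. -/
/-- Let `R` be a commutative ring. Then `R` satisfies ACCP if and only if the
self-idealization `R ⋉ R` satisfies ACCP. -/
theorem accp_iff_selfIdealization_accp (R : Type*) [CommRing R] :
    RingACCP R ↔ RingACCP (TrivSqZeroExt R R) := by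
  constructor
  · -- hard direction: ACCP of `R` implies ACCP of `R ⋉ R`
    intro hR F hF
    -- extract divisibility data of the chain
    have hdvd : ∀ n, ∃ G, F n = F (n + 1) * G := fun n =>
      Ideal.span_singleton_le_span_singleton.mp (hF n)
    choose G hG using hdvd
    -- Step 1: stabilize the chain of first components
    obtain ⟨k, hk⟩ := hR (fun n => (F n).fst) (by
      intro n
      refine Ideal.span_singleton_le_span_singleton.mpr ⟨(G n).fst, ?_⟩
      show (F n).fst = (F (n + 1)).fst * (G n).fst
      rw [hG n, TrivSqZeroExt.fst_mul])
    -- shifted sequences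
    set A : ℕ → R := fun n => (F (n + k)).fst with hAdef
    set Bb : ℕ → R := fun n => (F (n + k)).snd with hBdef
    set s : ℕ → R := fun n => (G (n + k)).fst with hsdef
    set t : ℕ → R := fun n => (G (n + k)).snd with htdef
    have hA : ∀ n, A n = A (n + 1) * s n := by
      intro n
      have e : (n + 1) + k = (n + k) + 1 := by omega
      simp only [hAdef, hsdef, e]
      rw [hG (n + k), TrivSqZeroExt.fst_mul]
    have hB : ∀ n, Bb n = A (n + 1) * t n + Bb (n + 1) * s n := by
      intro n
      have e : (n + 1) + k = (n + k) + 1 := by omega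
      simp only [hAdef, hBdef, hsdef, htdef, e]
      rw [hG (n + k), TrivSqZeroExt.snd_mul]
      simp [smul_eq_mul, op_smul_eq_mul]
    -- all the `A n` generate the same ideal
    have hspan : ∀ n m, Ideal.span {A n} = Ideal.span {A m} := by
      intro n m
      have h1 := hk (n + k) (by omega)
      have h2 := hk (m + k) (by omega)
      simp only [hAdef]
      rw [h1, h2]
    have hdAll : ∀ n m, A n ∣ A m := fun n m =>
      Ideal.span_singleton_le_span_singleton.mp (le_of_eq (hspan m n))
    choose rr hrr using fun n => hdAll n (n + 1)
    choose U hU using fun n => hdAll 0 n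
    choose W hW using fun n => hdAll n 0
    -- `1 - rr n * s n` kills every `A m`
    have hα : ∀ n, A (n + 1) * (1 - rr n * s n) = 0 := by
      intro n
      linear_combination hrr n + rr n * hA n
    have hαA : ∀ n m, A m * (1 - rr n * s n) = 0 := by
      intro n m
      linear_combination (1 - rr n * s n) * hU m + (U m * (1 - rr n * s n)) * hW (n + 1) +
        (U m * W (n + 1)) * hα n
    -- the correction sequence
    set c : ℕ → R := fun n =>
      Nat.rec 0 (fun m cm => rr m * (U (m + 1) * t m + cm)) n with hcdef
    have hc : ∀ n, c (n + 1) = rr n * (U (n + 1) * t n + c n) := fun n => rfl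
    -- the corrected second components form a principal chain
    have hh : ∀ n, Bb n + A 0 * c n = (Bb (n + 1) + A 0 * c (n + 1)) * s n := by
      intro n
      linear_combination hB n - (s n * A 0) * hc n + (U (n + 1) * t n + c n) * hαA n 0 +
        t n * hU (n + 1)
    -- Step 2: stabilize the corrected chain
    obtain ⟨K, hK⟩ := hR (fun n => Bb n + A 0 * c n) (by
      intro n
      exact Ideal.span_singleton_le_span_singleton.mpr ⟨s n, hh n⟩)
    -- the main step: from K on, consecutive ideals of the original chain agree
    have step : ∀ n, K ≤ n →
        Ideal.span {F ((n + 1) + k)} = Ideal.span {F (n + k)} := by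
      intro n hn
      -- a divisor for the corrected chain
      have hd : ∃ d, Bb (n + 1) + A 0 * c (n + 1) = (Bb n + A 0 * c n) * d := by
        refine Ideal.span_singleton_le_span_singleton.mp (le_of_eq ?_)
        have h1 := hK (n + 1) (by omega)
        have h2 := hK n hn
        rw [h1, h2]
      obtain ⟨d, hd⟩ := hd
      set X : R := rr n + (1 - rr n * s n) * d with hXdef
      set Y : R := W n * (X * c n - c (n + 1)) with hYdef
      have hfst : A (n + 1) = A n * X := by
        rw [hXdef]
        linear_combination hrr n - d * hαA n n
      have hsnd : Bb (n + 1) = A n * Y + Bb n * X := by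
        rw [hYdef, hXdef]
        linear_combination (-(rr n)) * hh n + (1 - rr n * s n) * hd +
          ((rr n + (1 - rr n * s n) * d) * c n - c (n + 1)) * hW n
      have hmul : F ((n + 1) + k) = F (n + k) * (TrivSqZeroExt.inl X + TrivSqZeroExt.inr Y) := by
        apply TrivSqZeroExt.ext
        · rw [TrivSqZeroExt.fst_mul]
          simpa using hfst
        · rw [TrivSqZeroExt.snd_mul]
          simpa [smul_eq_mul, op_smul_eq_mul] using hsnd
      apply le_antisymm
      · exact Ideal.span_singleton_le_span_singleton.mpr ⟨_, hmul⟩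
      · have e : (n + 1) + k = (n + k) + 1 := by omega
        rw [e]
        exact hF (n + k)
    -- assemble the stabilization statement
    refine ⟨K + k, ?_⟩
    have main : ∀ n, K ≤ n → Ideal.span {F (n + k)} = Ideal.span {F (K + k)} := by
      intro n hn
      induction n, hn using Nat.le_induction with
      | base => rfl
      | succ m hm ih => exact (step m hm).trans ih
    intro n hn
    have e : (n - k) + k = n := by omega
    calc Ideal.span {F n} = Ideal.span {F ((n - k) + k)} := by rw [e]
      _ = Ideal.span {F (K + k)} := main (n - k) (by omega)
  · -- easy direction: ACCP of `R ⋉ R` implies ACCP of `R`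
    intro hS f hf
    have hdvd : ∀ n, ∃ cc, f n = f (n + 1) * cc := fun n =>
      Ideal.span_singleton_le_span_singleton.mp (hf n)
    obtain ⟨k, hk⟩ := hS (fun n => TrivSqZeroExt.inl (f n)) (by
      intro n
      obtain ⟨cc, hcc⟩ := hdvd n
      refine Ideal.span_singleton_le_span_singleton.mpr ⟨TrivSqZeroExt.inl cc, ?_⟩
      rw [TrivSqZeroExt.inl_mul_inl, ← hcc])
    refine ⟨k, fun n hn => ?_⟩
    have h1 := hk n hn
    have d1 : (TrivSqZeroExt.inl (f k) : TrivSqZeroExt R R) ∣ TrivSqZeroExt.inl (f n) :=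
      Ideal.span_singleton_le_span_singleton.mp (le_of_eq h1)
    have d2 : (TrivSqZeroExt.inl (f n) : TrivSqZeroExt R R) ∣ TrivSqZeroExt.inl (f k) :=
      Ideal.span_singleton_le_span_singleton.mp (le_of_eq h1.symm)
    obtain ⟨z1, hz1⟩ := d1
    obtain ⟨z2, hz2⟩ := d2
    apply le_antisymm
    · refine Ideal.span_singleton_le_span_singleton.mpr ⟨z1.fst, ?_⟩
      have := congrArg TrivSqZeroExt.fst hz1
      simpa [TrivSqZeroExt.fst_mul] using this
    · refine Ideal.span_singleton_le_span_singleton.mpr ⟨z2.fst, ?_⟩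
      have := congrArg TrivSqZeroExt.fst hz2
      simpa [TrivSqZeroExt.fst_mul] using this
end

section
/- Let R be a commutative ring and M an R-module. If the idealization R⋉M is a bounded factorization ring, then R is a bounded factorization ring and M is a bounded factorization R-module. -/
/-- A commutative ring `R` is a bounded factorization ring (BFR) if for every nonzero
nonunit `r ∈ R` there is `n ∈ ℕ` such that whenever `r = r₁ ⋯ r_k` with every `rᵢ` a
nonunit of `R`, then `k ≤ n`. -/
def IsBFR (R : Type*) [CommRing R] : Prop :=
  ∀ r : R, r ≠ 0 → ¬ IsUnit r →
    ∃ n : ℕ, ∀ L : List R, (∀ a ∈ L, ¬ IsUnit a) → L.prod = r → L.length ≤ n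

/-- An `R`-module `M` is a bounded factorization module (BFM) if for every nonzero `x ∈ M`
there is `n ∈ ℕ` such that whenever `x = r₁ ⋯ r_k • y` with every `rᵢ` a nonunit of `R`
and `y ∈ M`, then `k ≤ n`. -/
def IsBFM (R M : Type*) [CommRing R] [AddCommGroup M] [Module R M] : Prop :=
  ∀ x : M, x ≠ 0 →
    ∃ n : ℕ, ∀ (L : List R) (y : M), (∀ a ∈ L, ¬ IsUnit a) → L.prod • y = x →
      L.length ≤ n

/-- If the idealization `R ⋉ M` is a bounded factorization ring, then `R` is a bounded
factorization ring and `M` is a bounded factorization `R`-module. -/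
theorem bfr_of_idealization_bfr {R M : Type*} [CommRing R] [AddCommGroup M] [Module R M]
    [Module Rᵐᵒᵖ M] [IsCentralScalar R M]
    (h : IsBFR (TrivSqZeroExt R M)) : IsBFR R ∧ IsBFM R M := by
  constructor
  · intro r hr hru
    obtain ⟨n, hn⟩ := h (TrivSqZeroExt.inl r)
      (fun hh => hr (by simpa using congrArg TrivSqZeroExt.fst hh))
      (by rwa [TrivSqZeroExt.isUnit_inl_iff])
    refine ⟨n, fun L hL hprod => ?_⟩
    have := hn (L.map (TrivSqZeroExt.inl : R → TrivSqZeroExt R M))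
      (by
        intro a ha
        obtain ⟨b, hb, rfl⟩ := List.mem_map.mp ha
        rw [TrivSqZeroExt.isUnit_inl_iff]
        exact hL b hb)
      (by
        rw [show (TrivSqZeroExt.inl : R → TrivSqZeroExt R M) = TrivSqZeroExt.inlHom R M from rfl,
          ← map_list_prod, hprod])
    simpa using this
  · intro x hx
    have hR : ¬ Subsingleton R := by
      intro hs
      apply hx
      have h01 : (0 : R) = 1 := Subsingleton.elim 0 1
      calc x = (1 : R) • x := (one_smul R x).symm
        _ = (0 : R) • x := by rw [h01]
        _ = 0 := zero_smul R x
    obtain ⟨n, hn⟩ := h (TrivSqZeroExt.inr x)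
      (fun hh => hx (TrivSqZeroExt.inr_injective (by simpa using hh)))
      (by rwa [TrivSqZeroExt.isUnit_inr_iff])
    refine ⟨n, fun L y hL hsmul => ?_⟩
    have := hn ((L.map (TrivSqZeroExt.inl : R → TrivSqZeroExt R M)) ++ [TrivSqZeroExt.inr y])
      (by
        intro a ha
        rcases List.mem_append.mp ha with ha | ha
        · obtain ⟨b, hb, rfl⟩ := List.mem_map.mp ha
          rw [TrivSqZeroExt.isUnit_inl_iff]
          exact hL b hb
        · simp only [List.mem_singleton] at ha
          subst ha
          rwa [TrivSqZeroExt.isUnit_inr_iff])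
      (by
        rw [List.prod_append, List.prod_singleton,
          show (TrivSqZeroExt.inl : R → TrivSqZeroExt R M) = TrivSqZeroExt.inlHom R M from rfl,
          ← map_list_prod]
        show TrivSqZeroExt.inl L.prod * TrivSqZeroExt.inr y = _
        rw [TrivSqZeroExt.inl_mul_inr, hsmul])
    simp only [List.length_append, List.length_map, List.length_singleton] at this
    omega
end

section
/- Let R be a commutative ring and M an R-module. Suppose R is a bounded factorization ring, M is a bounded factorization R-module, and the element 0 ∈ R is U-bounded. Then the idealization R⋉M is a bounded factorization ring. -/
/-- A factorization of `0` into nonunits, recorded as a multiset of factors, is minimal if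
no proper subproduct of the factors equals `0`. -/
def IsMinimalZeroFactorization {R : Type*} [CommRing R] (L : Multiset R) : Prop :=
  (∀ a ∈ L, ¬ IsUnit a) ∧ L.prod = 0 ∧ ∀ S : Multiset R, S ≤ L → S ≠ L → S.prod ≠ 0

/-- The element `0 ∈ R` is U-bounded if the set of lengths of minimal factorizations of `0`
into nonunits is bounded. -/
def ZeroUBounded (R : Type*) [CommRing R] : Prop :=
  ∃ n : ℕ, ∀ L : Multiset R, IsMinimalZeroFactorization L → Multiset.card L ≤ n

open TrivSqZeroExt Multiset

section aux
variable {R M : Type*} [CommRing R] [AddCommGroup M] [Module R M] [Module Rᵐᵒᵖ M]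
  [IsCentralScalar R M] [DecidableEq R]

lemma multiset_prod_of_le {S T : Multiset R} (h : S ≤ T) : T.prod = S.prod * (T - S).prod := by
  obtain ⟨u, rfl⟩ := Multiset.le_iff_exists_add.mp h
  rw [Multiset.prod_add, add_tsub_cancel_left]

lemma key_lemma (L : List (TrivSqZeroExt R M)) (S : Multiset R)
    (hS : S ≤ (L.map TrivSqZeroExt.fst : Multiset R)) :
    ∃ y z : M, (L.prod).snd =
      ((L.map TrivSqZeroExt.fst : Multiset R) - S).prod • y + S.prod • z := by
  classical
  induction L generalizing S with
  | nil =>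
    refine ⟨0, 0, by simp⟩
  | cons a L ih =>
    have hmap : ((a :: L).map TrivSqZeroExt.fst : Multiset R)
        = a.fst ::ₘ (L.map TrivSqZeroExt.fst : Multiset R) := rfl
    set F : Multiset R := (L.map TrivSqZeroExt.fst : Multiset R) with hF
    have hprodfst : (L.prod).fst = F.prod := by
      rw [fst_list_prod, hF, Multiset.prod_coe]
    by_cases h : S ≤ F
    · obtain ⟨y, z, hyz⟩ := ih S h
      refine ⟨y, a.fst • z + (F - S).prod • a.snd, ?_⟩
      rw [List.prod_cons, snd_mul, hmap, Multiset.cons_sub_of_le _ h, Multiset.prod_cons,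
        hyz, hprodfst, multiset_prod_of_le h, op_smul_eq_smul]
      simp only [smul_add, smul_smul]
      ring_nf
      module
    · have ha : a.fst ∈ S := by
        by_contra ha
        refine h (Multiset.le_iff_count.mpr fun b => ?_)
        have := Multiset.le_iff_count.mp hS b
        rw [hmap, Multiset.count_cons] at this
        rcases eq_or_ne b a.fst with rfl | hb
        · simpa [Multiset.count_eq_zero_of_notMem ha] using Nat.zero_le _
        · simpa [hb] using this
      have hS' : S.erase a.fst ≤ F := by
        have := Multiset.erase_le_erase a.fst hS
        rwa [hmap, Multiset.erase_cons_head] at this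
      obtain ⟨y, z, hyz⟩ := ih (S.erase a.fst) hS'
      have hsub : ((a :: L).map TrivSqZeroExt.fst : Multiset R) - S = F - S.erase a.fst := by
        conv_lhs => rw [hmap, ← Multiset.cons_erase ha, Multiset.sub_cons,
          Multiset.erase_cons_head]
      have hSprod : S.prod = a.fst * (S.erase a.fst).prod := (Multiset.prod_erase ha).symm
      refine ⟨a.fst • y + (S.erase a.fst).prod • a.snd, z, ?_⟩
      rw [List.prod_cons, snd_mul, hsub, hyz, hprodfst,
        multiset_prod_of_le hS', op_smul_eq_smul, hSprod]
      simp only [smul_add, smul_smul]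
      module

lemma exists_minimal_zero_sub {F : Multiset R} (hall : ∀ a ∈ F, ¬ IsUnit a)
    (hF : F.prod = 0) : ∃ S ≤ F, IsMinimalZeroFactorization S := by
  classical
  have hex : ∃ k : ℕ, ∃ S : Multiset R, S ≤ F ∧ S.prod = 0 ∧ Multiset.card S = k :=
    ⟨Multiset.card F, F, le_rfl, hF, rfl⟩
  obtain ⟨S, hSF, hS0, hcard⟩ := Nat.find_spec hex
  refine ⟨S, hSF, fun a ha => hall a (Multiset.mem_of_le hSF ha), hS0, fun T hT hTne => ?_⟩
  intro hT0
  have hlt : Multiset.card T < Multiset.card S := by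
    have := Multiset.card_le_card hT
    rcases this.lt_or_eq with h | h
    · exact h
    · exact absurd (Multiset.eq_of_le_of_card_le hT h.ge) hTne
  rw [hcard] at hlt
  exact Nat.find_min hex hlt ⟨T, hT.trans hSF, hT0, rfl⟩

end aux

/-- If `R` is a bounded factorization ring, `M` is a bounded factorization `R`-module, and
`0 ∈ R` is U-bounded, then the idealization `R ⋉ M` is a bounded factorization ring. -/
theorem idealization_bfr_of_bfr_bfm_zeroUBounded {R M : Type*} [CommRing R] [AddCommGroup M]
    [Module R M] [Module Rᵐᵒᵖ M] [IsCentralScalar R M]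
    (hR : IsBFR R) (hM : IsBFM R M) (h0 : ZeroUBounded R) :
    IsBFR (TrivSqZeroExt R M) := by
  classical
  intro p hp hpu
  have hpfu : ¬ IsUnit p.fst := fun h => hpu (isUnit_iff_isUnit_fst.mpr h)
  by_cases hr : p.fst = 0
  · -- p = (0, x), x ≠ 0
    have hx : p.snd ≠ 0 := by
      intro hx
      exact hp (TrivSqZeroExt.ext hr hx)
    obtain ⟨n0, hn0⟩ := h0
    obtain ⟨nM, hnM⟩ := hM p.snd hx
    refine ⟨n0 + nM, fun L hLu hLp => ?_⟩
    set F : Multiset R := (L.map TrivSqZeroExt.fst : Multiset R) with hF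
    have hFall : ∀ a ∈ F, ¬ IsUnit a := by
      intro a ha
      rw [hF, Multiset.mem_coe, List.mem_map] at ha
      obtain ⟨b, hb, rfl⟩ := ha
      exact fun h => hLu b hb (isUnit_iff_isUnit_fst.mpr h)
    have hFprod : F.prod = 0 := by
      rw [hF, Multiset.prod_coe, ← fst_list_prod, hLp, hr]
    obtain ⟨S, hSF, hSmin⟩ := exists_minimal_zero_sub hFall hFprod
    obtain ⟨y, z, hyz⟩ := key_lemma L S hSF
    rw [hLp, hSmin.2.1, zero_smul, add_zero] at hyz
    have hcard1 : Multiset.card S ≤ n0 := hn0 S hSmin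
    have hcard2 : Multiset.card (F - S) ≤ nM := by
      rw [← Multiset.length_toList (F - S)]
      refine hnM (F - S).toList y ?_ ?_
      · intro a ha
        rw [Multiset.mem_toList] at ha
        exact hFall a (Multiset.mem_of_le (tsub_le_self) ha)
      · rw [Multiset.prod_toList, ← hyz]
    have h1 : Multiset.card (F - S) = Multiset.card F - Multiset.card S :=
      Multiset.card_sub hSF
    have h2 : Multiset.card S ≤ Multiset.card F := Multiset.card_le_card hSF
    have h3 : Multiset.card F = L.length := by simp [hF]
    omega
  · -- p.fst ≠ 0
    obtain ⟨n, hn⟩ := hR p.fst hr hpfu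
    refine ⟨n, fun L hLu hLp => ?_⟩
    have := hn (L.map TrivSqZeroExt.fst) ?_ ?_
    · simpa using this
    · intro a ha
      rw [List.mem_map] at ha
      obtain ⟨b, hb, rfl⟩ := ha
      exact fun h => hLu b hb (isUnit_iff_isUnit_fst.mpr h)
    · rw [← fst_list_prod, hLp]
end

section
/- Let R be a commutative ring. If the element 0 ∈ R is U-bounded, then the set Min(R) of minimal prime ideals of R is finite. -/
/-- Any multiset with product zero contains a sub-multiset which is a minimal
zero-product multiset. -/
lemma exists_minimal_subzero {R : Type*} [CommRing R] :
    ∀ (M : Multiset R), M.prod = 0 →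
      ∃ S, S ≤ M ∧ S.prod = 0 ∧ ∀ T, T ≤ S → T ≠ S → T.prod ≠ 0 := by
  intro M
  induction M using Multiset.strongInductionOn with
  | _ M ih =>
    intro hM
    by_cases hc : ∃ T, T < M ∧ T.prod = 0
    · obtain ⟨T, hTM, hT⟩ := hc
      obtain ⟨S, hS, h0, hmin⟩ := ih T hTM hT
      exact ⟨S, hS.trans hTM.le, h0, hmin⟩
    · push_neg at hc
      exact ⟨M, le_rfl, hM, fun T hT hne => hc T (lt_of_le_of_ne hT hne)⟩

/-- If the element `0 ∈ R` is U-bounded, then the set of minimal prime ideals of `R`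
is finite. -/
theorem minimalPrimes_finite_of_zeroUBounded {R : Type*} [CommRing R]
    (h : ZeroUBounded R) : (minimalPrimes R).Finite := by
  classical
  obtain ⟨n, hn⟩ := h
  by_contra hinf
  have hinf' : (minimalPrimes R).Infinite := hinf
  obtain ⟨s, hs, hcard⟩ := hinf'.exists_subset_card_eq (n + 1)
  replace hs : ∀ P ∈ s, P ∈ minimalPrimes R := fun P hP => hs hP
  have hprime : ∀ P ∈ s, P.IsPrime := fun P hP => (hs P hP).1.1
  -- choose for each P ∈ s an element of P avoiding all other members of s
  have hx : ∀ P ∈ s, ∃ x, x ∈ P ∧ ∀ Q ∈ s, Q ≠ P → x ∉ Q := by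
    intro P hP
    by_contra hcon
    push_neg at hcon
    have hsub : (P : Set R) ⊆ ⋃ Q ∈ ((s.erase P : Finset (Ideal R)) : Set (Ideal R)),
        (Q : Set R) := by
      intro a haP
      obtain ⟨Q, hQs, hQP, haQ⟩ := hcon a haP
      exact Set.mem_biUnion (Finset.mem_coe.mpr (Finset.mem_erase.mpr ⟨hQP, hQs⟩)) haQ
    rw [Ideal.subset_union_prime P P
      (fun Q hQ _ _ => hprime Q (Finset.mem_erase.mp hQ).2)] at hsub
    obtain ⟨Q, hQ, hPQ⟩ := hsub
    obtain ⟨hQP, hQs⟩ := Finset.mem_erase.mp hQ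
    exact hQP (le_antisymm ((hs Q hQs).2 ⟨hprime P hP, bot_le⟩ hPQ) hPQ)
  choose x hx1 hx2 using hx
  set z : R := ∏ P ∈ s.attach, x P.1 P.2 with hz
  have hzmem : ∀ P (hP : P ∈ s), z ∈ P := by
    intro P hP
    obtain ⟨c, hc⟩ := Finset.dvd_prod_of_mem (fun Q : {Q // Q ∈ s} => x Q.1 Q.2)
      (s.mem_attach ⟨P, hP⟩)
    rw [hz, hc]
    exact P.mul_mem_right c (hx1 P hP)
  -- the multiplicative set { t * z ^ k | t outside every P ∈ s }
  set W : Submonoid R :=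
    { carrier := {r | ∃ (k : ℕ) (t : R), (∀ P ∈ s, t ∉ P) ∧ r = t * z ^ k}
      mul_mem' := by
        rintro a b ⟨k1, t1, ht1, rfl⟩ ⟨k2, t2, ht2, rfl⟩
        refine ⟨k1 + k2, t1 * t2, fun P hP hmem => ?_, by ring⟩
        rcases (hprime P hP).mem_or_mem hmem with hh | hh
        · exact ht1 P hP hh
        · exact ht2 P hP hh
      one_mem' := ⟨0, 1, fun P hP hmem =>
        (hprime P hP).ne_top (Ideal.eq_top_iff_one P |>.mpr hmem), by ring⟩ } with hWdef
  have hWmem : ∀ r : R, r ∈ W ↔ ∃ (k : ℕ) (t : R), (∀ P ∈ s, t ∉ P) ∧ r = t * z ^ k :=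
    fun r => Iff.rfl
  -- 0 ∈ W
  have h0W : (0 : R) ∈ W := by
    by_contra h0
    have hdis : Disjoint ((⊥ : Ideal R) : Set R) (W : Set R) := by
      rw [Set.disjoint_left]
      intro a ha haW
      rw [SetLike.mem_coe, Ideal.mem_bot] at ha
      subst ha
      exact h0 haW
    obtain ⟨Q, hQprime, _, hQdis⟩ := Ideal.exists_le_prime_disjoint ⊥ W hdis
    have hQsub : (Q : Set R) ⊆ ⋃ P ∈ ((s : Finset (Ideal R)) : Set (Ideal R)),
        (P : Set R) := by
      intro q hq
      by_contra hq'
      have hq'' : ∀ P ∈ s, q ∉ P := by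
        intro P hP hqP
        exact hq' (Set.mem_biUnion (Finset.mem_coe.mpr hP) hqP)
      have : q ∈ W := ⟨0, q, hq'', by rw [pow_zero, mul_one]⟩
      exact Set.disjoint_left.mp hQdis hq this
    rw [Ideal.subset_union_prime ⊥ ⊥ (fun P hP _ _ => hprime P hP)] at hQsub
    obtain ⟨P, hPs, hQP⟩ := hQsub
    have hPQ : P ≤ Q := (hs P hPs).2 ⟨hQprime, bot_le⟩ hQP
    have hzW : z ∈ W := ⟨1, 1, fun P hP hmem =>
      (hprime P hP).ne_top (Ideal.eq_top_iff_one P |>.mpr hmem), by ring⟩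
    exact Set.disjoint_left.mp hQdis (hPQ (hzmem P hPs)) hzW
  obtain ⟨k, t, ht, htz⟩ := h0W
  have htz' : t * z ^ k = 0 := htz.symm
  have hsne : s.Nonempty := Finset.card_pos.mp (by omega)
  have hk : k ≠ 0 := by
    rintro rfl
    rw [pow_zero, mul_one] at htz'
    obtain ⟨P, hP⟩ := hsne
    exact ht P hP (htz' ▸ P.zero_mem)
  -- the long factorization
  set L : Multiset R := s.attach.val.bind
    (fun P => Multiset.replicate k (t * x P.1 P.2)) with hL
  have hLprod : L.prod = 0 := by
    have h1 : L.prod = ∏ P ∈ s.attach, (t * x P.1 P.2) ^ k := by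
      rw [hL, Multiset.prod_bind]
      simp only [Multiset.prod_replicate]
      rfl
    have h2 : (∏ P ∈ s.attach, (t * x P.1 P.2) ^ k)
        = (t ^ s.attach.card * z) ^ k := by
      rw [Finset.prod_pow, Finset.prod_mul_distrib, Finset.prod_const, hz]
    have hdvd : (t * z ^ k) ∣ (t ^ s.attach.card * z) ^ k := by
      rw [mul_pow, ← pow_mul]
      refine mul_dvd_mul (dvd_pow_self t ?_) dvd_rfl
      have : s.attach.card = n + 1 := by rw [Finset.card_attach, hcard]
      simp [this, hk]
    rw [h1, h2]
    exact zero_dvd_iff.mp (htz' ▸ hdvd)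
  have hmemL : ∀ a ∈ L, ∃ (P : Ideal R) (hP : P ∈ s), a = t * x P hP := by
    intro a ha
    rw [hL, Multiset.mem_bind] at ha
    obtain ⟨P, _, ha⟩ := ha
    rw [Multiset.mem_replicate] at ha
    exact ⟨P.1, P.2, ha.2⟩
  -- membership pattern of elements of L in members of s
  have hpat : ∀ (P : Ideal R) (hP : P ∈ s) (Q : Ideal R) (_ : Q ∈ s),
      t * x P hP ∈ Q → P = Q := by
    intro P hP Q hQ hm
    rcases (hprime Q hQ).mem_or_mem hm with hh | hh
    · exact absurd hh (ht Q hQ)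
    · by_contra hne
      exact hx2 P hP Q hQ (fun h' => hne h'.symm) hh
  have hpat' : ∀ (P : Ideal R) (hP : P ∈ s), t * x P hP ∈ P :=
    fun P hP => P.mul_mem_left t (hx1 P hP)
  -- extract a minimal zero factorization
  obtain ⟨S, hSL, hS0, hSmin⟩ := exists_minimal_subzero L hLprod
  have hSfac : IsMinimalZeroFactorization S := by
    refine ⟨?_, hS0, hSmin⟩
    intro a ha hu
    obtain ⟨P, hP, rfl⟩ := hmemL a (Multiset.mem_of_le hSL ha)
    exact (hprime P hP).ne_top
      (Ideal.eq_top_of_isUnit_mem _ (hpat' P hP) hu)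
  -- S must contain, for each P ∈ s, an element of P; these are pairwise distinct
  have hpick : ∀ P ∈ s, ∃ a ∈ S, a ∈ P := by
    intro P hP
    exact ((hprime P hP).multiset_prod_mem_iff_exists_mem S).mp
      (by rw [hS0]; exact P.zero_mem)
  choose g hg1 hg2 using hpick
  set f : Ideal R → R := fun P => if hP : P ∈ s then g P hP else 0 with hf
  have hfS : ∀ P ∈ s, f P ∈ S.toFinset := by
    intro P hP
    have hfP : f P = g P hP := by rw [hf]; exact dif_pos hP
    rw [hfP]
    exact Multiset.mem_toFinset.mpr (hg1 P hP)
  have hfmem : ∀ P (hP : P ∈ s) (Q : Ideal R), Q ∈ s → f P ∈ Q → P = Q := by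
    intro P hP Q hQ hmem
    have hfP : f P = g P hP := by rw [hf]; exact dif_pos hP
    have hgL : g P hP ∈ L := Multiset.mem_of_le hSL (hg1 P hP)
    obtain ⟨P', hP', heq⟩ := hmemL _ hgL
    have h1 : P' = P := hpat P' hP' P hP (by rw [← heq]; exact hg2 P hP)
    have h2 : P' = Q := hpat P' hP' Q hQ (by rw [← heq]; rw [hfP] at hmem; exact hmem)
    rw [← h1, h2]
  have hinj : Set.InjOn f s := by
    intro P hP Q hQ hPQ
    have hfQ : f Q = g Q hQ := by rw [hf]; exact dif_pos hQ
    have h1 : f P ∈ Q := by rw [hPQ, hfQ]; exact hg2 Q hQ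
    exact hfmem P hP Q hQ h1
  have hcle : s.card ≤ S.toFinset.card :=
    Finset.card_le_card_of_injOn f hfS hinj
  have h1 : S.toFinset.card ≤ Multiset.card S := Multiset.toFinset_card_le S
  have h2 : Multiset.card S ≤ n := hn S hSfac
  omega
end

section
/- Let R be a reduced commutative ring. If the set Min(R) of minimal prime ideals of R is finite, then the element 0 ∈ R is U-bounded; indeed, every factorization 0 = r₁⋯r_n into nonunits can be refined to a subproduct equal to 0 of length at most |Min(R)|. -/
lemma refine_aux {R : Type*} [CommRing R] [IsReduced R]
    (hfin : (minimalPrimes R).Finite) (L : Multiset R) (hL : L.prod = 0) :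
    ∃ S : Multiset R, S ≤ L ∧ S.prod = 0 ∧
      Multiset.card S ≤ (minimalPrimes R).ncard := by
  classical
  -- for each minimal prime P, some factor of L lies in P
  have hchoice : ∀ P ∈ hfin.toFinset, ∃ a ∈ L, a ∈ P := by
    intro P hP
    rw [Set.Finite.mem_toFinset] at hP
    have hprime : P.IsPrime := hP.1.1
    have : L.prod ∈ P := by rw [hL]; exact P.zero_mem
    exact (hprime.multiset_prod_mem_iff_exists_mem L).mp this
  choose f hfL hfP using hchoice
  refine ⟨(hfin.toFinset.attach.image fun P : {x // x ∈ hfin.toFinset} => f P.1 P.2).val, ?_, ?_, ?_⟩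
  · rw [Multiset.le_iff_subset (Finset.nodup _)]
    intro a ha
    simp only [Finset.mem_val, Finset.mem_image, Finset.mem_attach, true_and,
      Subtype.exists] at ha
    obtain ⟨P, hP, rfl⟩ := ha
    exact hfL P hP
  · -- the product lies in every prime, hence is nilpotent, hence zero
    have hnil : IsNilpotent ((hfin.toFinset.attach.image fun P : {x // x ∈ hfin.toFinset} => f P.1 P.2).val).prod := by
      rw [← mem_nilradical, nilradical_eq_sInf, Submodule.mem_sInf]
      intro J hJ
      haveI : Ideal.IsPrime J := hJ
      obtain ⟨P, hP, hPJ⟩ := Ideal.exists_minimalPrimes_le (I := ⊥) (J := J) bot_le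
      have hPmem : P ∈ hfin.toFinset := by
        rwa [Set.Finite.mem_toFinset]
      have hmem : f P hPmem ∈ (hfin.toFinset.attach.image fun P : {x // x ∈ hfin.toFinset} => f P.1 P.2).val := by
        simp only [Finset.mem_val, Finset.mem_image]
        exact ⟨⟨P, hPmem⟩, Finset.mem_attach _ _, rfl⟩
      have : f P hPmem ∈ J := hPJ (hfP P hPmem)
      obtain ⟨T, hT⟩ := Multiset.dvd_prod hmem
      rw [hT]
      exact Ideal.mul_mem_right _ _ this
    exact IsReduced.eq_zero _ hnil
  · calc Multiset.card (hfin.toFinset.attach.image fun P : {x // x ∈ hfin.toFinset} => f P.1 P.2).val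
        = (hfin.toFinset.attach.image fun P : {x // x ∈ hfin.toFinset} => f P.1 P.2).card := rfl
      _ ≤ hfin.toFinset.attach.card := Finset.card_image_le
      _ = hfin.toFinset.card := Finset.card_attach
      _ = (minimalPrimes R).ncard := (Set.ncard_eq_toFinset_card _ hfin).symm

/-- Let `R` be a reduced commutative ring.  If the set of minimal prime ideals of `R` is
finite, then `0 ∈ R` is U-bounded; indeed, every factorization `0 = r₁ ⋯ r_n` into nonunits
can be refined to a subproduct equal to `0` of length at most `|Min R|`. -/
theorem zeroUBounded_of_reduced_minimalPrimes_finite {R : Type*} [CommRing R] [IsReduced R]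
    (hfin : (minimalPrimes R).Finite) :
    ZeroUBounded R ∧
      ∀ L : Multiset R, (∀ a ∈ L, ¬ IsUnit a) → L.prod = 0 →
        ∃ S : Multiset R, S ≤ L ∧ S.prod = 0 ∧
          Multiset.card S ≤ (minimalPrimes R).ncard := by
  constructor
  · refine ⟨(minimalPrimes R).ncard, fun L hL => ?_⟩
    obtain ⟨S, hSL, hS0, hScard⟩ := refine_aux hfin L hL.2.1
    rcases eq_or_ne S L with rfl | hne
    · exact hScard
    · exact absurd hS0 (hL.2.2 S hSL hne)
  · exact fun L _ hL0 => refine_aux hfin L hL0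
end

section
/- Let R be a reduced commutative ring which is a bounded factorization ring and has only finitely many minimal prime ideals, and let M be an R-module which is a bounded factorization R-module. Then the idealization R⋉M is a bounded factorization ring. -/
open TrivSqZeroExt in
private lemma key_snd {R M : Type*} [CommRing R] [AddCommGroup M] [Module R M]
    [Module Rᵐᵒᵖ M] [IsCentralScalar R M] :
    ∀ (L : List (TrivSqZeroExt R M)) (T D : Multiset R),
      ((L.map TrivSqZeroExt.fst : List R) : Multiset R) = T + D →
      ∃ y z : M, L.prod.snd = D.prod • y + T.prod • z
  | [], T, D, h => by
    have hTD : T + D = 0 := by simpa [eq_comm] using h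
    have hT : T = 0 := Multiset.le_zero.mp (hTD ▸ Multiset.le_add_right T D)
    have hD : D = 0 := Multiset.le_zero.mp (hTD ▸ Multiset.le_add_left D T)
    exact ⟨0, 0, by simp [hT, hD]⟩
  | x :: L, T, D, h => by
    classical
    have hx : x.fst ∈ T + D := by rw [← h]; simp
    have hLfst : L.prod.fst = ((L.map TrivSqZeroExt.fst : List R) : Multiset R).prod := by
      rw [Multiset.prod_coe, fst_list_prod]
    rcases Multiset.mem_add.mp hx with hm | hm
    · set T' := T.erase x.fst with hT'
      have hTT : x.fst ::ₘ T' = T := Multiset.cons_erase hm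
      have h' : ((L.map TrivSqZeroExt.fst : List R) : Multiset R) = T' + D := by
        rw [← Multiset.cons_inj_right x.fst, ← Multiset.cons_add, hTT, ← h]
        simp
      obtain ⟨y, z, hyz⟩ := key_snd L T' D h'
      refine ⟨x.fst • y + T'.prod • x.snd, z, ?_⟩
      rw [List.prod_cons, snd_mul, op_smul_eq_smul, hyz, hLfst, h', Multiset.prod_add,
        ← hTT, Multiset.prod_cons]
      module
    · set D' := D.erase x.fst with hD'
      have hDD : x.fst ::ₘ D' = D := Multiset.cons_erase hm
      have h' : ((L.map TrivSqZeroExt.fst : List R) : Multiset R) = T + D' := by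
        rw [← Multiset.cons_inj_right x.fst, add_comm T D', ← Multiset.cons_add, hDD,
          add_comm, ← h]
        simp
      obtain ⟨y, z, hyz⟩ := key_snd L T D' h'
      refine ⟨y, x.fst • z + D'.prod • x.snd, ?_⟩
      rw [List.prod_cons, snd_mul, op_smul_eq_smul, hyz, hLfst, h', Multiset.prod_add,
        ← hDD, Multiset.prod_cons]
      module

/-- Let `R` be a reduced commutative ring which is a bounded factorization ring and has
only finitely many minimal prime ideals, and let `M` be an `R`-module which is a bounded
factorization `R`-module.  Then the idealization `R ⋉ M` is a bounded factorization ring. -/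

theorem idealization_bfr_of_reduced {R M : Type*} [CommRing R] [IsReduced R] [AddCommGroup M]
    [Module R M] [Module Rᵐᵒᵖ M] [IsCentralScalar R M]
    (hR : IsBFR R) (hfin : (minimalPrimes R).Finite) (hM : IsBFM R M) :
    IsBFR (TrivSqZeroExt R M) := by
  classical
  intro x hx0 hxu
  by_cases hf : x.fst = 0
  · -- second-component case
    have hs : x.snd ≠ 0 := by
      intro h
      exact hx0 (TrivSqZeroExt.ext hf h)
    obtain ⟨n, hn⟩ := hM x.snd hs
    refine ⟨n + hfin.toFinset.card, ?_⟩
    intro L hLu hLp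
    set F : Multiset R := ((L.map TrivSqZeroExt.fst : List R) : Multiset R) with hF
    have hFmem : ∀ a ∈ F, ¬ IsUnit a := by
      intro a ha hua
      rw [hF, Multiset.mem_coe, List.mem_map] at ha
      obtain ⟨b, hb, rfl⟩ := ha
      exact hLu b hb (TrivSqZeroExt.isUnit_iff_isUnit_fst.mpr hua)
    have hFprod : F.prod = 0 := by
      rw [hF, Multiset.prod_coe, ← TrivSqZeroExt.fst_list_prod, hLp, hf]
    have hch : ∀ p ∈ minimalPrimes R, ∃ a ∈ F, a ∈ p := by
      intro p hp
      have hpr : p.IsPrime := hp.1.1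
      exact (hpr.multiset_prod_mem_iff_exists_mem F).mp (hFprod ▸ p.zero_mem)
    choose! g hgF hgp using hch
    set T : Multiset R := (hfin.toFinset.image g).val with hT
    have hmemT : ∀ a ∈ T, a ∈ F := by
      intro a ha
      rw [hT, Finset.mem_val, Finset.mem_image] at ha
      obtain ⟨p, hp, rfl⟩ := ha
      exact hgF p (hfin.mem_toFinset.mp hp)
    have hTF : T ≤ F := by
      rw [Multiset.le_iff_count]
      intro a
      by_cases ha : a ∈ T
      · have h1 : 1 ≤ F.count a := Multiset.one_le_count_iff_mem.mpr (hmemT a ha)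
        have h2 : T.count a = 1 :=
          Multiset.count_eq_one_of_mem (hfin.toFinset.image g).nodup ha
        omega
      · simp [Multiset.count_eq_zero_of_notMem ha]
    have hT0 : T.prod = 0 := by
      have hmem : T.prod ∈ sInf (minimalPrimes R) := by
        rw [Ideal.mem_sInf]
        intro p hp
        have hgT : g p ∈ T := by
          rw [hT, Finset.mem_val]
          exact Finset.mem_image_of_mem g (hfin.mem_toFinset.mpr hp)
        have := Multiset.cons_erase hgT
        rw [← this, Multiset.prod_cons]
        exact Ideal.mul_mem_right _ p (hgp p hp)
      have hbot : sInf (minimalPrimes R) = ⊥ := by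
        rw [minimalPrimes, Ideal.sInf_minimalPrimes]
        simpa [nilradical] using nilradical_eq_zero R
      rw [hbot] at hmem
      exact hmem
    set D : Multiset R := F - T with hD
    have hFD : F = T + D := by
      rw [hD, add_comm]
      exact (tsub_add_cancel_of_le hTF).symm
    obtain ⟨y, z, hyz⟩ := key_snd L T D (hF ▸ hFD)
    have hsnd : D.prod • y = x.snd := by
      rw [← hLp] at *
      rw [hyz, hT0, zero_smul, add_zero]
    have hDn : D.toList.length ≤ n := by
      refine hn D.toList y ?_ ?_
      · intro a ha
        exact hFmem a (Multiset.subset_of_le (hFD ▸ Multiset.le_add_left D T)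
          (by rwa [← Multiset.mem_toList]))
      · rwa [Multiset.prod_toList]
    have hcard : L.length = Multiset.card T + Multiset.card D := by
      rw [← Multiset.card_add, ← hFD, hF, Multiset.coe_card, List.length_map]
    have hTcard : Multiset.card T ≤ hfin.toFinset.card := by
      rw [hT]
      exact Finset.card_image_le
    rw [Multiset.length_toList] at hDn
    omega
  · -- first-component case
    have hfu : ¬ IsUnit x.fst := fun h => hxu (TrivSqZeroExt.isUnit_iff_isUnit_fst.mpr h)
    obtain ⟨n, hn⟩ := hR x.fst hf hfu
    refine ⟨n, ?_⟩
    intro L hLu hLp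
    have := hn (L.map TrivSqZeroExt.fst) ?_ ?_
    · simpa using this
    · intro a ha
      obtain ⟨b, hb, rfl⟩ := List.mem_map.mp ha
      exact fun h => hLu b hb (TrivSqZeroExt.isUnit_iff_isUnit_fst.mpr h)
    · rw [← TrivSqZeroExt.fst_list_prod, hLp]
end

section
/- Let R be a commutative ring and M a nonzero R-module. If the idealization R⋉M is a unique factorization ring, then R is a quasi-local ring whose maximal ideal 𝔪 satisfies 𝔪² = 0 and 𝔪M = 0. -/
set_option linter.unusedSectionVars false


/-- A nonunit `a` of a commutative ring is an atom (irreducible) if whenever `a = b * c`,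
then `a` is an associate of `b` or of `c` (associates meaning they generate the same
principal ideal). -/
def IsRingAtom {T : Type*} [CommRing T] (a : T) : Prop :=
  ¬ IsUnit a ∧ ∀ b c : T, a = b * c →
    Ideal.span {a} = Ideal.span ({b} : Set T) ∨ Ideal.span {a} = Ideal.span ({c} : Set T)

/-- A commutative ring `T` is a unique factorization ring (UFR) if every nonzero nonunit of
`T` is a finite product of atoms, and any two factorizations of the same element into atoms
have the same length and can be matched bijectively so that matched factors are associates. -/
def IsUFR (T : Type*) [CommRing T] : Prop :=
  ∀ x : T, x ≠ 0 → ¬ IsUnit x →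
    (∃ L : Multiset T, (∀ a ∈ L, IsRingAtom a) ∧ L.prod = x) ∧
      ∀ L₁ L₂ : Multiset T, (∀ a ∈ L₁, IsRingAtom a) → (∀ a ∈ L₂, IsRingAtom a) →
        L₁.prod = x → L₂.prod = x →
        Multiset.Rel (fun a b => Ideal.span ({a} : Set T) = Ideal.span ({b} : Set T)) L₁ L₂

section UFR

variable {T : Type*} [CommRing T]

open Classical in
noncomputable def ufrEll (h : IsUFR T) (x : T) : ℕ :=
  if hx : x ≠ 0 ∧ ¬ IsUnit x then ((h x hx.1 hx.2).1.choose).card else 0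

lemma ufrEll_spec (h : IsUFR T) {x : T} (hx0 : x ≠ 0) (hxu : ¬ IsUnit x) :
    ∃ L : Multiset T, (∀ a ∈ L, IsRingAtom a) ∧ L.prod = x ∧ L.card = ufrEll h x := by
  obtain ⟨h1, h2⟩ := (h x hx0 hxu).1.choose_spec
  exact ⟨_, h1, h2, by rw [ufrEll, dif_pos ⟨hx0, hxu⟩]⟩

lemma ufrEll_eq (h : IsUFR T) {x : T} (hx0 : x ≠ 0) (hxu : ¬ IsUnit x)
    {L : Multiset T} (hL : ∀ a ∈ L, IsRingAtom a) (hprod : L.prod = x) :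
    ufrEll h x = L.card := by
  obtain ⟨L', hL', hprod', hcard'⟩ := ufrEll_spec h hx0 hxu
  rw [← hcard']
  exact Multiset.card_eq_card_of_rel ((h x hx0 hxu).2 L' L hL' hL hprod' hprod)

lemma ufrEll_pos (h : IsUFR T) {x : T} (hx0 : x ≠ 0) (hxu : ¬ IsUnit x) :
    1 ≤ ufrEll h x := by
  obtain ⟨L, hL, hprod, hcard⟩ := ufrEll_spec h hx0 hxu
  rw [← hcard]
  by_contra hlt
  have hc0 : L.card = 0 := by omega
  rw [Multiset.card_eq_zero] at hc0
  rw [hc0, Multiset.prod_zero] at hprod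
  exact hxu (hprod ▸ isUnit_one)

lemma ufrEll_mul (h : IsUFR T) {x y : T} (hx0 : x ≠ 0) (hxu : ¬ IsUnit x)
    (hy0 : y ≠ 0) (hyu : ¬ IsUnit y) (hxy : x * y ≠ 0) :
    ufrEll h (x * y) = ufrEll h x + ufrEll h y := by
  obtain ⟨L, hL, hLp, hLc⟩ := ufrEll_spec h hx0 hxu
  obtain ⟨K, hK, hKp, hKc⟩ := ufrEll_spec h hy0 hyu
  have hxyu : ¬ IsUnit (x * y) := fun hu => hxu (isUnit_of_mul_isUnit_left hu)
  have : ufrEll h (x * y) = (L + K).card :=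
    ufrEll_eq h hxy hxyu (fun a ha => by
      rcases Multiset.mem_add.mp ha with h' | h'
      exacts [hL a h', hK a h'])
      (by rw [Multiset.prod_add, hLp, hKp])
  rw [this, Multiset.card_add, hLc, hKc]

lemma ufrEll_atom (h : IsUFR T) {p : T} (hp : IsRingAtom p) (hp0 : p ≠ 0) :
    ufrEll h p = 1 := by
  rw [ufrEll_eq h hp0 hp.1 (L := {p}) (fun a ha => by
    rwa [Multiset.mem_singleton.mp ha]) (Multiset.prod_singleton p)]
  simp

lemma isRingAtom_of_ufrEll_eq_one (h : IsUFR T) {x : T} (hx0 : x ≠ 0) (hxu : ¬ IsUnit x)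
    (h1 : ufrEll h x = 1) : IsRingAtom x := by
  obtain ⟨L, hL, hprod, hcard⟩ := ufrEll_spec h hx0 hxu
  rw [h1] at hcard
  obtain ⟨a, rfl⟩ := Multiset.card_eq_one.mp hcard
  rw [Multiset.prod_singleton] at hprod
  exact hprod ▸ hL a (Multiset.mem_singleton_self a)

lemma ufrEll_pow (h : IsUFR T) {x : T} (hx0 : x ≠ 0) (hxu : ¬ IsUnit x) {n : ℕ}
    (hn : 1 ≤ n) (hxn : x ^ n ≠ 0) : ufrEll h (x ^ n) = n * ufrEll h x := by
  induction n with
  | zero => omega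
  | succ k ih =>
    rcases Nat.eq_zero_or_pos k with rfl | hk
    · simp
    · have hxk : x ^ k ≠ 0 := fun h0 => hxn (by rw [pow_succ, h0, zero_mul])
      have hxku : ¬ IsUnit (x ^ k) := by
        intro hu
        apply hxu
        have hxe : x ^ k = x * x ^ (k - 1) := by
          conv_lhs => rw [show k = 1 + (k - 1) by omega]
          rw [pow_add, pow_one]
        rw [hxe] at hu
        exact isUnit_of_mul_isUnit_left hu
      rw [pow_succ, ufrEll_mul h hxk hxku hx0 hxu (pow_succ x k ▸ hxn), ih hk hxk]
      ring

lemma pair_rigid (h : IsUFR T) {p q r s : T}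
    (hp : IsRingAtom p) (hq : IsRingAtom q) (hr : IsRingAtom r) (hs : IsRingAtom s)
    (hne : p * q ≠ 0) (heq : p * q = r * s) :
    (Ideal.span {p} = Ideal.span ({r} : Set T) ∧ Ideal.span {q} = Ideal.span ({s} : Set T)) ∨
    (Ideal.span {p} = Ideal.span ({s} : Set T) ∧ Ideal.span {q} = Ideal.span ({r} : Set T)) := by
  have hu : ¬ IsUnit (p * q) := fun hu => hp.1 (isUnit_of_mul_isUnit_left hu)
  have hmem : ∀ a ∈ ({p, q} : Multiset T), IsRingAtom a := by
    intro a ha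
    rcases Multiset.mem_cons.mp ha with rfl | ha
    · exact hp
    · rwa [Multiset.mem_singleton.mp ha]
  have hmem' : ∀ a ∈ ({r, s} : Multiset T), IsRingAtom a := by
    intro a ha
    rcases Multiset.mem_cons.mp ha with rfl | ha
    · exact hr
    · rwa [Multiset.mem_singleton.mp ha]
  have hrel := (h (p * q) hne hu).2 {p, q} {r, s} hmem hmem'
    (by simp) (by simp [heq.symm])
  obtain ⟨b, bs, hpb, hrel2, hcs⟩ := Multiset.rel_cons_left.mp hrel
  obtain ⟨b', bs', hqb', hrel3, hcs'⟩ := Multiset.rel_cons_left.mp hrel2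
  rw [Multiset.rel_zero_left.mp hrel3] at hcs'
  rw [hcs'] at hcs
  have hbmem : b ∈ ({r, s} : Multiset T) := hcs ▸ Multiset.mem_cons_self b _
  rcases Multiset.mem_cons.mp hbmem with rfl | hb
  · left
    have : ({s} : Multiset T) = {b'} := by
      have := hcs
      rwa [show ({b, s} : Multiset T) = b ::ₘ {s} from rfl, Multiset.cons_inj_right] at this
    exact ⟨hpb, (Multiset.singleton_inj.mp this) ▸ hqb'⟩
  · rw [Multiset.mem_singleton.mp hb] at hpb hcs
    right
    have : ({r} : Multiset T) = {b'} := by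
      rw [Multiset.pair_comm r s] at hcs
      rwa [show ({s, r} : Multiset T) = s ::ₘ {r} from rfl, Multiset.cons_inj_right] at hcs
    exact ⟨hpb, (Multiset.singleton_inj.mp this) ▸ hqb'⟩

end UFR
section Idealization

open TrivSqZeroExt

variable {R M : Type*} [CommRing R] [AddCommGroup M] [Module R M]
  [Module Rᵐᵒᵖ M] [IsCentralScalar R M]

lemma tsze_mul_expand (a b : R) (m n : M) :
    ((inl a + inr m) * (inl b + inr n) : TrivSqZeroExt R M) =
      inl (a * b) + inr (a • n + b • m) := by
  ext
  · simp [fst_mul]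
  · simp [snd_mul, op_smul_eq_smul]

lemma tsze_eq_zero_iff (a : R) (m : M) :
    (inl a + inr m : TrivSqZeroExt R M) = 0 ↔ a = 0 ∧ m = 0 := by
  constructor
  · intro h0
    have h1 := congrArg fst h0
    have h2 := congrArg snd h0
    simp at h1 h2
    exact ⟨h1, h2⟩
  · rintro ⟨rfl, rfl⟩
    simp

lemma tsze_isUnit_iff (a : R) (m : M) :
    IsUnit (inl a + inr m : TrivSqZeroExt R M) ↔ IsUnit a := by
  rw [isUnit_iff_isUnit_fst]
  simp

lemma tsze_inr_ne_zero {m : M} (hm : m ≠ 0) : (inr m : TrivSqZeroExt R M) ≠ 0 := by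
  intro e
  exact hm (by simpa using congrArg snd e)

end Idealization
section Main

open TrivSqZeroExt

variable {R M : Type*} [CommRing R] [AddCommGroup M] [Module R M]
  [Module Rᵐᵒᵖ M] [IsCentralScalar R M]

lemma atom_fst_smul (h : IsUFR (TrivSqZeroExt R M)) {p : TrivSqZeroExt R M}
    (hp : IsRingAtom p) (m : M) : p.fst • m = 0 := by
  by_contra hcm
  set c := p.fst with hc
  have hm0 : m ≠ 0 := fun e => hcm (by rw [e, smul_zero])
  have hc0 : c ≠ 0 := fun e => hcm (by rw [e, zero_smul])
  haveI : Nontrivial R := ⟨c, 0, hc0⟩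
  have hcu : ¬ IsUnit c := fun hu => hp.1 (isUnit_iff_isUnit_fst.mpr hu)
  have hq0 : ∀ y' : M, (inl c + inr y' : TrivSqZeroExt R M) ≠ 0 :=
    fun y' e => hc0 ((tsze_eq_zero_iff c y').mp e).1
  have hqu : ∀ y' : M, ¬ IsUnit (inl c + inr y' : TrivSqZeroExt R M) :=
    fun y' hu => hcu ((tsze_isUnit_iff c y').mp hu)
  have hkey : ∀ y' : M, (inl c + inr y' : TrivSqZeroExt R M) * inr m = inr (c • m) := by
    intro y'
    rw [show (inr m : TrivSqZeroExt R M) = inl (0 : R) + inr m by simp, tsze_mul_expand]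
    simp
  have hinr_ne : (inr (c • m) : TrivSqZeroExt R M) ≠ 0 := tsze_inr_ne_zero hcm
  have hinrm_ne : (inr m : TrivSqZeroExt R M) ≠ 0 := tsze_inr_ne_zero hm0
  have hinr_u : ∀ x : M, ¬ IsUnit (inr x : TrivSqZeroExt R M) :=
    fun x hu => (not_subsingleton R) (isUnit_inr_iff.mp hu)
  have hpe : p = inl c + inr p.snd := (inl_fst_add_inr_snd_eq p).symm
  have hp0 : p ≠ 0 := by rw [hpe]; exact hq0 p.snd
  have hellp : ufrEll h p = 1 := ufrEll_atom h hp hp0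
  have hell : ∀ y' : M, ufrEll h (inl c + inr y' : TrivSqZeroExt R M) = 1 := by
    intro y'
    have e1 : ufrEll h (inr (c • m) : TrivSqZeroExt R M) =
        ufrEll h (inl c + inr y' : TrivSqZeroExt R M) + ufrEll h (inr m : TrivSqZeroExt R M) := by
      rw [← hkey y']
      exact ufrEll_mul h (hq0 y') (hqu y') hinrm_ne (hinr_u m) (by rw [hkey y']; exact hinr_ne)
    have e2 : ufrEll h (inr (c • m) : TrivSqZeroExt R M) =
        ufrEll h p + ufrEll h (inr m : TrivSqZeroExt R M) := by
      conv_lhs => rw [← hkey p.snd, ← hpe]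
      exact ufrEll_mul h hp0 hp.1 hinrm_ne (hinr_u m)
        (by rw [hpe, hkey p.snd]; exact hinr_ne)
    omega
  have hatom : ∀ y' : M, IsRingAtom (inl c + inr y' : TrivSqZeroExt R M) :=
    fun y' => isRingAtom_of_ufrEll_eq_one h (hq0 y') (hqu y') (hell y')
  by_cases hcc : c * c = 0
  · -- case c² = 0
    have hqq : (inl c + inr m : TrivSqZeroExt R M) * (inl c + inr 0) = inr (c • m) := by
      rw [tsze_mul_expand, hcc]
      simp
    have hellinr : ufrEll h (inr m : TrivSqZeroExt R M) = 1 := by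
      have e1 : ufrEll h (inr (c • m) : TrivSqZeroExt R M) = 1 + 1 := by
        rw [← hqq, ufrEll_mul h (hq0 m) (hqu m) (hq0 0) (hqu 0) (by rw [hqq]; exact hinr_ne),
          hell m, hell 0]
      have e2 : ufrEll h (inr (c • m) : TrivSqZeroExt R M) =
          1 + ufrEll h (inr m : TrivSqZeroExt R M) := by
        rw [← hkey 0, ufrEll_mul h (hq0 0) (hqu 0) hinrm_ne (hinr_u m)
          (by rw [hkey 0]; exact hinr_ne), hell 0]
      omega
    have hinratom : IsRingAtom (inr m : TrivSqZeroExt R M) :=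
      isRingAtom_of_ufrEll_eq_one h hinrm_ne (hinr_u m) hellinr
    have hrig := pair_rigid h (hatom m) (hatom 0) (hatom 0) hinratom
      (by rw [hqq]; exact hinr_ne) (by rw [hqq, hkey 0])
    have fst_of_span : ∀ x : TrivSqZeroExt R M,
        Ideal.span {x} = Ideal.span {(inr m : TrivSqZeroExt R M)} → x.fst = 0 := by
      intro x hx
      have hmem : x ∈ Ideal.span {(inr m : TrivSqZeroExt R M)} := by
        rw [← hx]
        exact Ideal.subset_span rfl
      obtain ⟨t, ht⟩ := Ideal.mem_span_singleton'.mp hmem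
      have := congrArg fst ht
      simpa [fst_mul] using this.symm
    rcases hrig with ⟨h1, h2⟩ | ⟨h1, h2⟩
    · exact hc0 (by simpa using fst_of_span _ h2)
    · exact hc0 (by simpa using fst_of_span _ h1)
  · -- case c² ≠ 0
    have hmul2 : (inl c + inr (0 : M) : TrivSqZeroExt R M) * (inl c + inr 0) =
        inl (c * c) + inr 0 := by
      rw [tsze_mul_expand]
      simp
    have hne2 : (inl (c * c) + inr (0 : M) : TrivSqZeroExt R M) ≠ 0 :=
      fun e => hcc ((tsze_eq_zero_iff _ _).mp e).1
    have hspan : ∀ y' : M, Ideal.span {(inl c + inr y' : TrivSqZeroExt R M)} =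
        Ideal.span {(inl c + inr 0 : TrivSqZeroExt R M)} := by
      intro y'
      have hmul1 : (inl c + inr y' : TrivSqZeroExt R M) * (inl c + inr (-y')) =
          inl (c * c) + inr 0 := by
        rw [tsze_mul_expand]
        congr 1
        rw [smul_neg, neg_add_cancel]
      have hrig := pair_rigid h (hatom y') (hatom (-y')) (hatom 0) (hatom 0)
        (by rw [hmul1]; exact hne2) (by rw [hmul1, hmul2])
      rcases hrig with ⟨h1, _⟩ | ⟨h1, _⟩ <;> exact h1
    have hsurj : ∀ y' : M, ∃ v : M, y' = c • v := by
      intro y'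
      have hmem : (inl c + inr y' : TrivSqZeroExt R M) ∈
          Ideal.span {(inl c + inr 0 : TrivSqZeroExt R M)} := by
        rw [← hspan y']
        exact Ideal.subset_span rfl
      obtain ⟨t, ht⟩ := Ideal.mem_span_singleton'.mp hmem
      refine ⟨t.snd, ?_⟩
      have hts : t * (inl c + inr 0 : TrivSqZeroExt R M) =
          inl (t.fst * c) + inr (c • t.snd) := by
        conv_lhs => rw [← inl_fst_add_inr_snd_eq t]
        rw [tsze_mul_expand]
        simp
      rw [hts] at ht
      have := congrArg snd ht
      simpa using this.symm
    have hpow : ∀ k : ℕ, ∃ v : M, v ≠ 0 ∧ m = c ^ k • v := by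
      intro k
      induction k with
      | zero => exact ⟨m, hm0, by simp⟩
      | succ n ih =>
        obtain ⟨v, hv0, hv⟩ := ih
        obtain ⟨w, hw⟩ := hsurj v
        refine ⟨w, fun e => hv0 (by rw [hw, e, smul_zero]), ?_⟩
        rw [hv, hw, smul_smul, ← pow_succ]
    have hcpow : ∀ k : ℕ, c ^ k ≠ 0 := by
      intro k e
      obtain ⟨v, hv0, hv⟩ := hpow k
      exact hm0 (by rw [hv, e, zero_smul])
    set n := ufrEll h (inr m : TrivSqZeroExt R M) with hn
    obtain ⟨v, hv0, hv⟩ := hpow n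
    have hicl : (inl c + inr (0 : M) : TrivSqZeroExt R M) = inl c := by simp
    have hfac : (inl c : TrivSqZeroExt R M) ^ n * inr v = inr m := by
      rw [inl_pow, inl_mul_inr, ← hv]
    have hpn0 : ((inl c : TrivSqZeroExt R M)) ^ n ≠ 0 := by
      rw [inl_pow]
      intro e
      exact hcpow n (by simpa using congrArg fst e)
    have hpnu : ¬ IsUnit ((inl c : TrivSqZeroExt R M) ^ n) := by
      rw [inl_pow]
      intro hu
      rw [isUnit_inl_iff] at hu
      rcases Nat.eq_zero_or_pos n with hn0 | hn1
      · have := ufrEll_pos h hinrm_ne (hinr_u m)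
        omega
      · have hee : c ^ n = c * c ^ (n - 1) := by
          conv_lhs => rw [show n = 1 + (n - 1) by omega]
          rw [pow_add, pow_one]
        rw [hee] at hu
        exact hcu (isUnit_of_mul_isUnit_left hu)
    have hn1 : 1 ≤ n := ufrEll_pos h hinrm_ne (hinr_u m)
    have hic0 : (inl c : TrivSqZeroExt R M) ≠ 0 := by rw [← hicl]; exact hq0 0
    have hicu : ¬ IsUnit (inl c : TrivSqZeroExt R M) := by rw [← hicl]; exact hqu 0
    have hclen : ufrEll h (inl c : TrivSqZeroExt R M) = 1 := by rw [← hicl]; exact hell 0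
    have hv_ne : (inr v : TrivSqZeroExt R M) ≠ 0 := tsze_inr_ne_zero hv0
    have e1 : n = n * 1 + ufrEll h (inr v : TrivSqZeroExt R M) := by
      conv_lhs => rw [hn, ← hfac]
      rw [ufrEll_mul h hpn0 hpnu hv_ne (hinr_u v) (by rw [hfac]; exact hinrm_ne),
        ufrEll_pow h hic0 hicu hn1 hpn0, hclen]
    have e2 := ufrEll_pos h hv_ne (hinr_u v)
    omega

end Main
section Main2

open TrivSqZeroExt

variable {R M : Type*} [CommRing R] [AddCommGroup M] [Module R M]
  [Module Rᵐᵒᵖ M] [IsCentralScalar R M] [Nontrivial M]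

lemma atom_fst_mul (h : IsUFR (TrivSqZeroExt R M)) {p q : TrivSqZeroExt R M}
    (hp : IsRingAtom p) (hq : IsRingAtom q) : p.fst * q.fst = 0 := by
  by_contra hcd
  obtain ⟨m₀, hm₀⟩ := exists_ne (0 : M)
  set c := p.fst with hcdef
  set d := q.fst with hddef
  have hc0 : c ≠ 0 := fun e => hcd (by rw [e, zero_mul])
  have hd0 : d ≠ 0 := fun e => hcd (by rw [e, mul_zero])
  haveI : Nontrivial R := ⟨c, 0, hc0⟩
  have hcu : ¬ IsUnit c := fun hu => hp.1 (isUnit_iff_isUnit_fst.mpr hu)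
  have hdu : ¬ IsUnit d := fun hu => hq.1 (isUnit_iff_isUnit_fst.mpr hu)
  have hcs : ∀ x : M, c • x = 0 := atom_fst_smul h hp
  have hds : ∀ x : M, d • x = 0 := atom_fst_smul h hq
  have hmulgen : ∀ y w : M, (inl c + inr y : TrivSqZeroExt R M) * (inl d + inr w) =
      inl (c * d) := by
    intro y w
    rw [tsze_mul_expand, hcs w, hds y]
    simp
  have hcd_ne : (inl (c * d) : TrivSqZeroExt R M) ≠ 0 :=
    fun e => hcd (by simpa using congrArg fst e)
  have hcd_u : ¬ IsUnit (inl (c * d) : TrivSqZeroExt R M) := by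
    rw [isUnit_inl_iff]
    exact fun hu => hcu (isUnit_of_mul_isUnit_left hu)
  have hq0c : ∀ y' : M, (inl c + inr y' : TrivSqZeroExt R M) ≠ 0 :=
    fun y' e => hc0 ((tsze_eq_zero_iff c y').mp e).1
  have hquc : ∀ y' : M, ¬ IsUnit (inl c + inr y' : TrivSqZeroExt R M) :=
    fun y' hu => hcu ((tsze_isUnit_iff c y').mp hu)
  have hq0d : ∀ w' : M, (inl d + inr w' : TrivSqZeroExt R M) ≠ 0 :=
    fun w' e => hd0 ((tsze_eq_zero_iff d w').mp e).1
  have hqud : ∀ w' : M, ¬ IsUnit (inl d + inr w' : TrivSqZeroExt R M) :=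
    fun w' hu => hdu ((tsze_isUnit_iff d w').mp hu)
  have hpe : p = inl c + inr p.snd := (inl_fst_add_inr_snd_eq p).symm
  have hqe : q = inl d + inr q.snd := (inl_fst_add_inr_snd_eq q).symm
  have hp0 : p ≠ 0 := by rw [hpe]; exact hq0c p.snd
  have hq0' : q ≠ 0 := by rw [hqe]; exact hq0d q.snd
  have hell2 : ufrEll h (inl (c * d) : TrivSqZeroExt R M) = 2 := by
    have : p * q = inl (c * d) := by rw [hpe, hqe]; exact hmulgen _ _
    rw [← this, ufrEll_mul h hp0 hp.1 hq0' hq.1 (by rw [this]; exact hcd_ne),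
      ufrEll_atom h hp hp0, ufrEll_atom h hq hq0']
  have hellc : ∀ y' : M, ufrEll h (inl c + inr y' : TrivSqZeroExt R M) = 1 := by
    intro y'
    have hmul : (inl c + inr y' : TrivSqZeroExt R M) * q = inl (c * d) := by
      rw [hqe]; exact hmulgen _ _
    have := ufrEll_mul h (hq0c y') (hquc y') hq0' hq.1 (by rw [hmul]; exact hcd_ne)
    rw [hmul, hell2, ufrEll_atom h hq hq0'] at this
    omega
  have hatc : ∀ y' : M, IsRingAtom (inl c + inr y' : TrivSqZeroExt R M) :=
    fun y' => isRingAtom_of_ufrEll_eq_one h (hq0c y') (hquc y') (hellc y')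
  have helld : ufrEll h (inl d + inr (0 : M) : TrivSqZeroExt R M) = 1 := by
    have hmul : (inl c + inr (0 : M) : TrivSqZeroExt R M) * (inl d + inr 0) = inl (c * d) :=
      hmulgen _ _
    have := ufrEll_mul h (hq0c 0) (hquc 0) (hq0d 0) (hqud 0) (by rw [hmul]; exact hcd_ne)
    rw [hmul, hell2, hellc 0] at this
    omega
  have hatd : IsRingAtom (inl d + inr (0 : M) : TrivSqZeroExt R M) :=
    isRingAtom_of_ufrEll_eq_one h (hq0d 0) (hqud 0) helld
  have hrig := pair_rigid h (hatc m₀) hatd (hatc 0) hatd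
    (by rw [hmulgen m₀ 0]; exact hcd_ne) (by rw [hmulgen m₀ 0, hmulgen 0 0])
  have snd_of_span : ∀ e : R, (∀ x : M, e • x = 0) →
      Ideal.span {(inl c + inr m₀ : TrivSqZeroExt R M)} =
        Ideal.span {(inl e + inr 0 : TrivSqZeroExt R M)} → False := by
    intro e hes hsp
    have hmem : (inl c + inr m₀ : TrivSqZeroExt R M) ∈
        Ideal.span {(inl e + inr 0 : TrivSqZeroExt R M)} := by
      rw [← hsp]
      exact Ideal.subset_span rfl
    obtain ⟨t, ht⟩ := Ideal.mem_span_singleton'.mp hmem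
    have hts : t * (inl e + inr 0 : TrivSqZeroExt R M) =
        inl (t.fst * e) + inr 0 := by
      conv_lhs => rw [← inl_fst_add_inr_snd_eq t]
      rw [tsze_mul_expand, hes t.snd]
      simp
    rw [hts] at ht
    have := congrArg snd ht
    simp at this
    exact hm₀ this.symm
  rcases hrig with ⟨h1, _⟩ | ⟨h1, _⟩
  · exact snd_of_span c hcs h1
  · exact snd_of_span d hds h1

lemma inl_isRingAtom (h : IsUFR (TrivSqZeroExt R M)) {x : R} (hx0 : x ≠ 0)
    (hxu : ¬ IsUnit x) : IsRingAtom (inl x : TrivSqZeroExt R M) := by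
  have hne : (inl x : TrivSqZeroExt R M) ≠ 0 := fun e => hx0 (by simpa using congrArg fst e)
  have hnu : ¬ IsUnit (inl x : TrivSqZeroExt R M) := by rwa [isUnit_inl_iff]
  obtain ⟨L, hL, hprod, hcard⟩ := ufrEll_spec h hne hnu
  have hLne : L ≠ 0 := by
    intro e
    rw [e, Multiset.prod_zero] at hprod
    exact hnu (hprod ▸ isUnit_one)
  obtain ⟨a, ha⟩ := Multiset.exists_mem_of_ne_zero hLne
  obtain ⟨L', rfl⟩ := Multiset.exists_cons_of_mem ha
  rcases L'.empty_or_exists_mem with rfl | ⟨b, hb⟩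
  · rw [Multiset.prod_cons, Multiset.prod_zero, mul_one] at hprod
    exact hprod ▸ hL a (Multiset.mem_cons_self a 0)
  · exfalso
    obtain ⟨L'', rfl⟩ := Multiset.exists_cons_of_mem hb
    apply hx0
    have h0 : a.fst * b.fst = 0 :=
      atom_fst_mul h (hL a (Multiset.mem_cons_self a _))
        (hL b (Multiset.mem_cons_of_mem (Multiset.mem_cons_self b _)))
    have := congrArg fst hprod
    rw [Multiset.prod_cons, Multiset.prod_cons, fst_mul, fst_mul, ← mul_assoc, h0,
      zero_mul, fst_inl] at this
    exact this.symm

lemma nonunit_mul_eq_zero (h : IsUFR (TrivSqZeroExt R M)) {a b : R}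
    (ha : ¬ IsUnit a) (hb : ¬ IsUnit b) : a * b = 0 := by
  rcases eq_or_ne a 0 with rfl | ha0
  · rw [zero_mul]
  rcases eq_or_ne b 0 with rfl | hb0
  · rw [mul_zero]
  have := atom_fst_mul h (inl_isRingAtom h ha0 ha) (inl_isRingAtom h hb0 hb)
  simpa using this

lemma nonunit_smul_eq_zero (h : IsUFR (TrivSqZeroExt R M)) {a : R}
    (ha : ¬ IsUnit a) (m : M) : a • m = 0 := by
  rcases eq_or_ne a 0 with rfl | ha0
  · rw [zero_smul]
  have := atom_fst_smul h (inl_isRingAtom h ha0 ha) m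
  simpa using this

end Main2

/-- Let `R` be a commutative ring and `M` a nonzero `R`-module.  If the idealization
`R ⋉ M` is a unique factorization ring, then `R` is quasi-local with maximal ideal `𝔪`
satisfying `𝔪² = 0` and `𝔪 M = 0`. -/
theorem local_of_idealization_ufr {R M : Type*} [CommRing R] [AddCommGroup M] [Module R M]
    [Module Rᵐᵒᵖ M] [IsCentralScalar R M] [Nontrivial M]
    (h : IsUFR (TrivSqZeroExt R M)) :
    ∃ hloc : IsLocalRing R,
      (@IsLocalRing.maximalIdeal R _ hloc) ^ 2 = ⊥ ∧
        (@IsLocalRing.maximalIdeal R _ hloc) • (⊤ : Submodule R M) = ⊥ := by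
  obtain ⟨m₀, hm₀⟩ := exists_ne (0 : M)
  haveI : Nontrivial R := by
    refine ⟨1, 0, fun e => hm₀ ?_⟩
    calc m₀ = (1 : R) • m₀ := (one_smul R m₀).symm
    _ = (0 : R) • m₀ := by rw [e]
    _ = 0 := zero_smul R m₀
  have mul0 : ∀ a b : R, ¬ IsUnit a → ¬ IsUnit b → a * b = 0 :=
    fun a b ha hb => nonunit_mul_eq_zero h ha hb
  have smul0 : ∀ a : R, ¬ IsUnit a → ∀ m : M, a • m = 0 :=
    fun a ha m => nonunit_smul_eq_zero h ha m
  haveI hloc : IsLocalRing R := by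
    apply IsLocalRing.of_nonunits_add
    intro a b ha hb
    rw [mem_nonunits_iff] at ha hb ⊢
    intro habu
    have h1 : a * (a + b) = 0 := by
      rw [mul_add, mul0 a a ha ha, mul0 a b ha hb, add_zero]
    obtain ⟨u, hu⟩ := habu
    have ha0 : a = 0 := by
      calc a = a * (↑u * ↑u⁻¹) := by rw [Units.mul_inv, mul_one]
      _ = (a * ↑u) * ↑u⁻¹ := by ring
      _ = (a * (a + b)) * ↑u⁻¹ := by rw [hu]
      _ = 0 := by rw [h1, zero_mul]
    apply hb
    rw [← zero_add b, ← ha0, ← hu]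
    exact u.isUnit
  refine ⟨hloc, ?_, ?_⟩
  · rw [pow_two, eq_bot_iff]
    refine Ideal.mul_le.mpr fun r hr s hs => ?_
    rw [IsLocalRing.mem_maximalIdeal, mem_nonunits_iff] at hr hs
    rw [Ideal.mem_bot]
    exact mul0 r s hr hs
  · rw [eq_bot_iff]
    refine Submodule.smul_le.mpr fun r hr n _ => ?_
    rw [IsLocalRing.mem_maximalIdeal, mem_nonunits_iff] at hr
    rw [Submodule.mem_bot]
    exact smul0 r hr n
end

section
/- Let R be a commutative quasi-local ring with maximal ideal 𝔪 satisfying 𝔪² = 0, and let M be an R-module with 𝔪M = 0. Then the idealization R⋉M is présimplifiable and every nonzero nonunit element of R⋉M is an atom. -/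
/-- A commutative ring `T` is présimplifiable if whenever `a = a * b` in `T`, then `a = 0`
or `b` is a unit. -/
def Presimplifiable (T : Type*) [CommRing T] : Prop :=
  ∀ a b : T, a = a * b → a = 0 ∨ IsUnit b

/-- Let `R` be a commutative quasi-local ring whose maximal ideal `𝔪` satisfies `𝔪² = 0`,
and let `M` be an `R`-module with `𝔪 M = 0`.  Then the idealization `R ⋉ M` is
présimplifiable and every nonzero nonunit element of `R ⋉ M` is an atom. -/
theorem idealization_presimplifiable_and_atoms {R M : Type*} [CommRing R] [IsLocalRing R]
    [AddCommGroup M] [Module R M] [Module Rᵐᵒᵖ M] [IsCentralScalar R M]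
    (hm2 : IsLocalRing.maximalIdeal R ^ 2 = ⊥)
    (hmM : IsLocalRing.maximalIdeal R • (⊤ : Submodule R M) = ⊥) :
    Presimplifiable (TrivSqZeroExt R M) ∧
      ∀ a : TrivSqZeroExt R M, a ≠ 0 → ¬ IsUnit a → IsRingAtom a := by
  -- any element of 𝔪 kills M
  have hkill : ∀ r : R, r ∈ IsLocalRing.maximalIdeal R → ∀ m : M, r • m = 0 := by
    intro r hr m
    have : r • m ∈ IsLocalRing.maximalIdeal R • (⊤ : Submodule R M) :=
      Submodule.smul_mem_smul hr Submodule.mem_top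
    rw [hmM] at this
    simpa using this
  -- product of two nonunits is zero
  have key : ∀ x y : TrivSqZeroExt R M, ¬ IsUnit x → ¬ IsUnit y → x * y = 0 := by
    intro x y hx hy
    rw [TrivSqZeroExt.isUnit_iff_isUnit_fst] at hx hy
    have hxm : x.fst ∈ IsLocalRing.maximalIdeal R := hx
    have hym : y.fst ∈ IsLocalRing.maximalIdeal R := hy
    ext
    · show (x * y).fst = (0 : TrivSqZeroExt R M).fst
      rw [TrivSqZeroExt.fst_mul, TrivSqZeroExt.fst_zero]
      have : x.fst * y.fst ∈ (IsLocalRing.maximalIdeal R) ^ 2 := by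
        rw [sq]; exact Ideal.mul_mem_mul hxm hym
      rw [hm2] at this
      simpa using this
    · show (x * y).snd = (0 : TrivSqZeroExt R M).snd
      rw [TrivSqZeroExt.snd_mul, TrivSqZeroExt.snd_zero]
      rw [op_smul_eq_smul]
      rw [hkill _ hxm, hkill _ hym, add_zero]
  have hpre : Presimplifiable (TrivSqZeroExt R M) := by
    intro a b hab
    by_cases hb : IsUnit b
    · exact Or.inr hb
    by_cases ha : IsUnit a
    · exact Or.inr (isUnit_of_mul_isUnit_right (hab ▸ ha))
    · exact Or.inl (by rw [hab, key a b ha hb])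
  refine ⟨hpre, ?_⟩
  · intro a ha hau
    refine ⟨hau, ?_⟩
    intro b c habc
    by_cases hb : IsUnit b
    · right
      rw [habc, Ideal.span_singleton_mul_left_unit hb]
    by_cases hc : IsUnit c
    · left
      rw [habc, mul_comm, Ideal.span_singleton_mul_left_unit hc]
    · exact absurd (habc ▸ key b c hb hc) ha
end

section
/- Let R be a commutative ring and M a nonzero R-module. If the idealization R⋉M is a special principal ideal ring (a quasi-local principal ideal ring whose maximal ideal is nilpotent), then the maximal ideal of R is zero (so R is a field) and M is a cyclic R-module. -/
open TrivSqZeroExt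

/-- Let `R` be a commutative ring and `M` a nonzero `R`-module.  If the idealization
`R ⋉ M` is a special principal ideal ring (a quasi-local principal ideal ring whose maximal
ideal is nilpotent), then the maximal ideal of `R` is zero (so `R` is a field) and `M` is a
cyclic `R`-module. -/
theorem of_idealization_spir {R M : Type*} [CommRing R] [AddCommGroup M] [Module R M]
    [Module Rᵐᵒᵖ M] [IsCentralScalar R M] [Nontrivial M]
    (hloc : IsLocalRing (TrivSqZeroExt R M))
    (hpir : IsPrincipalIdealRing (TrivSqZeroExt R M))
    (hnil : IsNilpotent (@IsLocalRing.maximalIdeal (TrivSqZeroExt R M) _ hloc)) :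
    (∃ hR : IsLocalRing R, @IsLocalRing.maximalIdeal R _ hR = ⊥) ∧
      ∃ x : M, (⊤ : Submodule R M) = Submodule.span R {x} := by
  haveI hRnt : Nontrivial R := Module.nontrivial R M
  obtain ⟨n, hn⟩ := hnil
  obtain ⟨z, hz⟩ := (hpir.principal (IsLocalRing.maximalIdeal (TrivSqZeroExt R M))).principal
  set a : R := z.fst with ha_def
  set e : M := z.snd with he_def
  have hmem : ∀ p : TrivSqZeroExt R M,
      p ∈ IsLocalRing.maximalIdeal (TrivSqZeroExt R M) ↔ ¬ IsUnit p.fst := by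
    intro p
    rw [IsLocalRing.mem_maximalIdeal, mem_nonunits_iff, isUnit_iff_isUnit_fst]
  have hzmem : z ∈ IsLocalRing.maximalIdeal (TrivSqZeroExt R M) := by
    rw [hz]; exact Ideal.subset_span rfl
  have ha : ¬ IsUnit a := (hmem z).mp hzmem
  have han : a ^ n = 0 := by
    have hzn : z ^ n = 0 := by
      have := Ideal.pow_mem_pow hzmem n
      rw [hn] at this
      simpa using this
    have : (z ^ n).fst = a ^ n := fst_pow z n
    rw [hzn] at this
    simpa using this.symm
  have hsolve : ∀ p : TrivSqZeroExt R M, ¬ IsUnit p.fst →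
      ∃ s : TrivSqZeroExt R M, s * z = p := by
    intro p hp
    have hp' : p ∈ Submodule.span (TrivSqZeroExt R M) {z} := hz ▸ (hmem p).mpr hp
    exact Ideal.mem_span_singleton'.mp hp'
  -- every element of M is r • e + a • y
  have key : ∀ x : M, ∃ r : R, ∃ y : M, x = r • e + a • y := by
    intro x
    obtain ⟨s, hs⟩ := hsolve (inr x) (fun h => not_isUnit_zero (by rwa [fst_inr] at h))
    refine ⟨s.fst, s.snd, ?_⟩
    have h2 := congrArg TrivSqZeroExt.snd hs
    rw [snd_mul, snd_inr] at h2
    rw [← h2, op_smul_eq_smul]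
  have hspan : ∀ x : M, x ∈ Submodule.span R {e} := by
    have H : ∀ k : ℕ, ∀ x : M, ∃ (r : R) (y : M), x = r • e + a ^ (k + 1) • y := by
      intro k
      induction k with
      | zero => intro x; simpa [pow_one] using key x
      | succ k ih =>
        intro x
        obtain ⟨r, y, hxy⟩ := ih x
        obtain ⟨r', y', hy⟩ := key y
        refine ⟨r + a ^ (k + 1) * r', y', ?_⟩
        rw [hxy, hy, smul_add, add_smul, smul_smul, smul_smul, pow_succ]
        abel_nf
        ring_nf
    intro x
    obtain ⟨r, y, hxy⟩ := H n x
    have hzero : a ^ (n + 1) = 0 := by rw [pow_succ, han, zero_mul]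
    rw [hxy, hzero, zero_smul, add_zero]
    exact Submodule.smul_mem _ r (Submodule.mem_span_singleton_self e)
  have he : e ≠ 0 := by
    intro h
    obtain ⟨x, hx⟩ := exists_ne (0 : M)
    have := hspan x
    rw [h, Submodule.span_zero_singleton, Submodule.mem_bot] at this
    exact hx this
  haveI hR : IsLocalRing R :=
    IsLocalRing.of_surjective' (TrivSqZeroExt.fstHom R R M).toRingHom
      (fun r => ⟨inl r, fst_inl M r⟩)
  -- the key descent step for the maximal ideal of R
  have step : ∀ r ∈ IsLocalRing.maximalIdeal R, ∃ r' ∈ IsLocalRing.maximalIdeal R,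
      r = a * r' := by
    intro r hr
    obtain ⟨s, hs⟩ := hsolve (inl r) (by
      rw [fst_inl]; exact mem_nonunits_iff.mp ((IsLocalRing.mem_maximalIdeal r).mp hr))
    have h1 : s.fst * a = r := by
      have := congrArg TrivSqZeroExt.fst hs
      rwa [fst_mul, fst_inl] at this
    have h2 : s.fst • e + a • s.snd = 0 := by
      have := congrArg TrivSqZeroExt.snd hs
      rwa [snd_mul, snd_inl, op_smul_eq_smul] at this
    obtain ⟨u, hu⟩ := Submodule.mem_span_singleton.mp (hspan s.snd)
    have hc : (s.fst + a * u) • e = 0 := by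
      rw [add_smul, mul_smul, hu]; exact h2
    have hcnu : s.fst + a * u ∈ IsLocalRing.maximalIdeal R := by
      rw [IsLocalRing.mem_maximalIdeal, mem_nonunits_iff]
      intro hun
      exact he (hun.smul_eq_zero.mp hc)
    refine ⟨s.fst + a * u - a * u + (- (a * u) + a * u), ?_, ?_⟩
    · have hau : a * u ∈ IsLocalRing.maximalIdeal R := by
        rw [IsLocalRing.mem_maximalIdeal, mem_nonunits_iff]
        intro hun
        exact ha (isUnit_of_mul_isUnit_left hun)
      simpa using Ideal.sub_mem _ hcnu hau
    · rw [← h1]; ring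
  have iter : ∀ k : ℕ, ∀ r ∈ IsLocalRing.maximalIdeal R,
      ∃ r' ∈ IsLocalRing.maximalIdeal R, r = a ^ k * r' := by
    intro k
    induction k with
    | zero => intro r hr; exact ⟨r, hr, by simp⟩
    | succ k ih =>
      intro r hr
      obtain ⟨r', hr', h⟩ := ih r hr
      obtain ⟨r'', hr'', h'⟩ := step r' hr'
      exact ⟨r'', hr'', by rw [h, h', pow_succ]; ring⟩
  refine ⟨⟨hR, ?_⟩, e, ?_⟩
  · rw [eq_bot_iff]
    intro r hr
    obtain ⟨r', _, h⟩ := iter n r hr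
    rw [Submodule.mem_bot, h, han, zero_mul]
  · exact le_antisymm (fun x _ => hspan x) le_top
end
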